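/- arXiv:2502.11391 — 3 statements merged into one kernel-verified Lean document; each statement's English description precedes it below -/
import Mathlib

section
/- Let M be a perfect matching of a connected graph G with af(G,M) = Af(G), and let e = uv be an edge of G not in M. Let G_e be the graph obtained from G by deleting the edge e, adding four new vertices w₁, w₂, w₃, w₄, and adding the edges uw₁, w₁w₂, w₂w₃, w₃w₄, w₄v and w₁w₄. Then M_e = M ∪ {w₁w₄, w₂w₃} is a perfect matching of G_e and Af(G_e) = af(G_e, M_e). -/
/-- `M` is a perfect matching of `G`, regarded as a set of edges: every edge of `M` is an
edge of `G` and every vertex lies in exactly one edge of `M`. -/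
def IsPM {V : Type*} (G : SimpleGraph V) (M : Set (Sym2 V)) : Prop :=
  M ⊆ G.edgeSet ∧ ∀ w : V, ∃! e, e ∈ M ∧ w ∈ e

/-- A graph is matchable if it has a perfect matching. -/
def Matchable {V : Type*} (G : SimpleGraph V) : Prop :=
  ∃ M, IsPM G M

/-- A global forcing set of `G`: a set `S` of edges of `G` distinguishing all
perfect matchings of `G`. -/
def IsGlobalForcingSet {V : Type*} (G : SimpleGraph V) (S : Set (Sym2 V)) : Prop :=
  S ⊆ G.edgeSet ∧
    ∀ M₁ M₂, IsPM G M₁ → IsPM G M₂ → M₁ ≠ M₂ → S ∩ M₁ ≠ S ∩ M₂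

/-- The global forcing number: the minimum cardinality of a global forcing set. -/
noncomputable def gf {V : Type*} (G : SimpleGraph V) : ℕ :=
  sInf {n | ∃ S, IsGlobalForcingSet G S ∧ S.ncard = n}

/-- An anti-forcing set of a perfect matching `M` of `G`: a set `S` of edges of `G`
disjoint from `M` such that `M` is the unique perfect matching of `G - S`. -/
def IsAntiForcingSet {V : Type*} (G : SimpleGraph V) (M S : Set (Sym2 V)) : Prop :=
  S ⊆ G.edgeSet ∧ S ∩ M = ∅ ∧ IsPM (G.deleteEdges S) M ∧
    ∀ M', IsPM (G.deleteEdges S) M' → M' = M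

/-- The anti-forcing number of a perfect matching `M` of `G`. -/
noncomputable def af {V : Type*} (G : SimpleGraph V) (M : Set (Sym2 V)) : ℕ :=
  sInf {n | ∃ S, IsAntiForcingSet G M S ∧ S.ncard = n}

/-- The maximum anti-forcing number of `G`. -/
noncomputable def Af {V : Type*} (G : SimpleGraph V) : ℕ :=
  sSup {n | ∃ M, IsPM G M ∧ af G M = n}

/-- The graph `G_e` obtained from `G` by deleting the edge `e = uv`, adding four new
vertices `w₁, w₂, w₃, w₄` and adding the edges `uw₁, w₁w₂, w₂w₃, w₃w₄, w₄v, w₁w₄`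
(the new vertices `w₁, w₂, w₃, w₄` are `Sum.inr 0, …, Sum.inr 3`). -/
def addSquare {V : Type*} (G : SimpleGraph V) (u v : V) : SimpleGraph (V ⊕ Fin 4) :=
  SimpleGraph.fromEdgeSet
    ((Sym2.map Sum.inl '' (G.edgeSet \ {s(u, v)})) ∪
      {s(Sum.inl u, Sum.inr 0), s(Sum.inr 0, Sum.inr 1), s(Sum.inr 1, Sum.inr 2),
       s(Sum.inr 2, Sum.inr 3), s(Sum.inr 3, Sum.inl v), s(Sum.inr 0, Sum.inr 3)})


/-!
On the gadget, a perfect matching of `G_e` is either `{w₁w₄, w₂w₃}` or `{w₁w₂, w₃w₄}`, the rest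
being a perfect matching of `G` avoiding `uv`, or `{uw₁, w₂w₃, w₄v}`, the rest together with `uv`
being a perfect matching of `G`. So every perfect matching `N` of `G_e` contracts to one of `G`
(`baseMatching`), and an anti-forcing set `S` of the contracted matching gives one of `N` after
adding a single gadget edge that blocks the competing configuration (two edges if `uv ∈ S`, but
then `uv` itself is dropped): `af(G_e, N) ≤ Af(G) + 1`. Conversely an anti-forcing set of `M_e`
must contain `w₁w₂` or `w₃w₄`, and its edges inside `G`, together with `uv` if it also contains
`uw₁` or `w₄v`, form an anti-forcing set of `M`: `af(G_e, M_e) ≥ af(G, M) + 1 = Af(G) + 1`.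
-/

section PerfectMatching

variable {V : Type*} {G : SimpleGraph V} {M M' S : Set (Sym2 V)}

theorem IsPM.exists_mem (hM : IsPM G M) (x : V) : ∃ e ∈ M, x ∈ e :=
  (hM.2 x).exists

theorem IsPM.eq_of_mem (hM : IsPM G M) {x : V} {e₁ e₂ : Sym2 V} (he₁ : e₁ ∈ M)
    (he₂ : e₂ ∈ M) (hx₁ : x ∈ e₁) (hx₂ : x ∈ e₂) : e₁ = e₂ :=
  (hM.2 x).unique ⟨he₁, hx₁⟩ ⟨he₂, hx₂⟩

theorem IsPM.eq_of_subset (hM : IsPM G M) (hM' : IsPM G M') (h : M' ⊆ M) : M' = M := by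
  refine h.antisymm fun e he => ?_
  induction e using Sym2.ind with
  | _ x y =>
    obtain ⟨e', he', hxe'⟩ := hM'.exists_mem x
    exact hM.eq_of_mem (h he') he hxe' (Sym2.mem_mk_left x y) ▸ he'

theorem isPM_of_exists_of_unique (hM : M ⊆ G.edgeSet) (hex : ∀ x, ∃ e ∈ M, x ∈ e)
    (huniq : ∀ x e₁ e₂, e₁ ∈ M → e₂ ∈ M → x ∈ e₁ → x ∈ e₂ → e₁ = e₂) : IsPM G M :=
  ⟨hM, fun x =>
    let ⟨e, he, hxe⟩ := hex x
    ⟨e, ⟨he, hxe⟩, fun e' ⟨he', hxe'⟩ => huniq x e' e he' he hxe' hxe⟩⟩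

theorem isPM_deleteEdges_iff : IsPM (G.deleteEdges S) M ↔ IsPM G M ∧ Disjoint M S := by
  simp only [IsPM, SimpleGraph.edgeSet_deleteEdges, Set.subset_sdiff]
  tauto

theorem IsPM.isAntiForcingSet_iff (hM : IsPM G M) :
    IsAntiForcingSet G M S ↔
      S ⊆ G.edgeSet ∧ Disjoint S M ∧ ∀ M', IsPM G M' → Disjoint M' S → M' = M := by
  simp only [IsAntiForcingSet, isPM_deleteEdges_iff, ← Set.disjoint_iff_inter_eq_empty,
    disjoint_comm (a := M), and_imp]
  tauto

theorem isAntiForcingSet_edgeSet_diff (hM : IsPM G M) :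
    IsAntiForcingSet G M (G.edgeSet \ M) :=
  hM.isAntiForcingSet_iff.2 ⟨Set.sdiff_subset, Set.disjoint_sdiff_left, fun M' hM' hdisj =>
    hM.eq_of_subset hM' fun e he => by
      by_contra heM
      exact Set.disjoint_left.1 hdisj he ⟨hM'.1 he, heM⟩⟩

theorem af_le_ncard (hS : IsAntiForcingSet G M S) : af G M ≤ S.ncard :=
  Nat.sInf_le ⟨S, hS, rfl⟩

theorem exists_isAntiForcingSet_ncard_eq_af (hM : IsPM G M) :
    ∃ S, IsAntiForcingSet G M S ∧ S.ncard = af G M :=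
  Nat.sInf_mem (s := {n | ∃ S, IsAntiForcingSet G M S ∧ S.ncard = n})
    ⟨_, _, isAntiForcingSet_edgeSet_diff hM, rfl⟩

theorem af_le_Af [Finite V] (hM : IsPM G M) : af G M ≤ Af G := by
  refine le_csSup ⟨G.edgeSet.ncard, ?_⟩ ⟨M, hM, rfl⟩
  rintro _ ⟨M', hM', rfl⟩
  exact (af_le_ncard (isAntiForcingSet_edgeSet_diff hM')).trans
    (Set.ncard_le_ncard Set.sdiff_subset)

theorem Af_le {k : ℕ} (h : ∀ M, IsPM G M → af G M ≤ k) : Af G ≤ k :=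
  csSup_le' fun _ ⟨M, hM, hk⟩ => hk ▸ h M hM

end PerfectMatching

section AddSquare

variable {V : Type*} {G : SimpleGraph V} {u v : V}

def squareEdges (u v : V) : Set (Sym2 (V ⊕ Fin 4)) :=
  {s(Sum.inl u, Sum.inr 0), s(Sum.inr 0, Sum.inr 1), s(Sum.inr 1, Sum.inr 2),
   s(Sum.inr 2, Sum.inr 3), s(Sum.inr 3, Sum.inl v), s(Sum.inr 0, Sum.inr 3)}

theorem edgeSet_addSquare (G : SimpleGraph V) (u v : V) :
    (addSquare G u v).edgeSet =
      Sym2.map Sum.inl '' (G.edgeSet \ {s(u, v)}) ∪ squareEdges u v := by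
  refine (SimpleGraph.edgeSet_fromEdgeSet _).trans (sdiff_eq_left.2 ?_)
  refine Set.disjoint_left.2 fun e he hdiag => ?_
  rcases he with ⟨f, ⟨hf, -⟩, rfl⟩ | he
  · exact G.not_isDiag_of_mem_edgeSet hf (Sym2.isDiag_map Sum.inl_injective |>.1 hdiag)
  · simp only [Set.mem_insert_iff, Set.mem_singleton_iff] at he
    rcases he with rfl | rfl | rfl | rfl | rfl | rfl <;> simp at hdiag

theorem map_inl_notMem_squareEdges (f : Sym2 V) : Sym2.map Sum.inl f ∉ squareEdges u v := by
  induction f using Sym2.ind with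
  | _ x y => simp [squareEdges]

theorem map_inl_mem_edgeSet_addSquare {f : Sym2 V} :
    Sym2.map Sum.inl f ∈ (addSquare G u v).edgeSet ↔ f ∈ G.edgeSet ∧ f ≠ s(u, v) := by
  rw [edgeSet_addSquare, Set.mem_union, (Sym2.map.injective Sum.inl_injective).mem_set_image]
  simp [map_inl_notMem_squareEdges]

theorem squareEdges_subset_edgeSet_addSquare :
    squareEdges u v ⊆ (addSquare G u v).edgeSet :=
  edgeSet_addSquare G u v ▸ Set.subset_union_right

theorem mem_squareEdges_of_inr_mem {e : Sym2 (V ⊕ Fin 4)} {i : Fin 4}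
    (he : e ∈ (addSquare G u v).edgeSet) (hi : Sum.inr i ∈ e) : e ∈ squareEdges u v := by
  rw [edgeSet_addSquare] at he
  rcases he with ⟨f, -, rfl⟩ | he
  · simp at hi
  · exact he

theorem IsPM.exists_mem_inter_squareEdges {N : Set (Sym2 (V ⊕ Fin 4))}
    (hN : IsPM (addSquare G u v) N) (i : Fin 4) :
    ∃ e ∈ N ∩ squareEdges u v, Sum.inr i ∈ e := by
  obtain ⟨e, heN, hi⟩ := hN.exists_mem (Sum.inr i)
  exact ⟨e, ⟨heN, mem_squareEdges_of_inr_mem (hN.1 heN) hi⟩, hi⟩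

theorem IsPM.covers_new_vertices {N : Set (Sym2 (V ⊕ Fin 4))}
    (hN : IsPM (addSquare G u v) N) :
    (s(Sum.inl u, Sum.inr 0) ∈ N ∨ s(Sum.inr 0, Sum.inr 1) ∈ N ∨ s(Sum.inr 0, Sum.inr 3) ∈ N) ∧
    (s(Sum.inr 0, Sum.inr 1) ∈ N ∨ s(Sum.inr 1, Sum.inr 2) ∈ N) ∧
    (s(Sum.inr 1, Sum.inr 2) ∈ N ∨ s(Sum.inr 2, Sum.inr 3) ∈ N) ∧
    (s(Sum.inr 2, Sum.inr 3) ∈ N ∨ s(Sum.inr 3, Sum.inl v) ∈ N ∨ s(Sum.inr 0, Sum.inr 3) ∈ N) := by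
  refine ⟨?_, ?_, ?_, ?_⟩ <;>
  [obtain ⟨e, ⟨heN, he⟩, hi⟩ := hN.exists_mem_inter_squareEdges 0;
   obtain ⟨e, ⟨heN, he⟩, hi⟩ := hN.exists_mem_inter_squareEdges 1;
   obtain ⟨e, ⟨heN, he⟩, hi⟩ := hN.exists_mem_inter_squareEdges 2;
   obtain ⟨e, ⟨heN, he⟩, hi⟩ := hN.exists_mem_inter_squareEdges 3] <;>
  · simp only [squareEdges, Set.mem_insert_iff, Set.mem_singleton_iff] at he
    rcases he with rfl | rfl | rfl | rfl | rfl | rfl <;> simp_all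

theorem IsPM.gadget_edges_mem_iff {N : Set (Sym2 (V ⊕ Fin 4))}
    (hN : IsPM (addSquare G u v) N) :
    (s(Sum.inr 0, Sum.inr 1) ∈ N ↔ s(Sum.inr 1, Sum.inr 2) ∉ N) ∧
      (s(Sum.inr 2, Sum.inr 3) ∈ N ↔ s(Sum.inr 1, Sum.inr 2) ∉ N) ∧
      (s(Sum.inr 3, Sum.inl v) ∈ N ↔ s(Sum.inl u, Sum.inr 0) ∈ N) ∧
      (s(Sum.inr 0, Sum.inr 3) ∈ N ↔
        s(Sum.inr 1, Sum.inr 2) ∈ N ∧ s(Sum.inl u, Sum.inr 0) ∉ N) ∧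
      (s(Sum.inl u, Sum.inr 0) ∈ N → s(Sum.inr 1, Sum.inr 2) ∈ N) := by
  obtain ⟨cover₁, cover₂, cover₃, cover₄⟩ := hN.covers_new_vertices
  have excl (i : Fin 4) (e₁ e₂ : Sym2 (V ⊕ Fin 4)) (hne : e₁ ≠ e₂) (hi₁ : Sum.inr i ∈ e₁)
      (hi₂ : Sum.inr i ∈ e₂) : ¬(e₁ ∈ N ∧ e₂ ∈ N) :=
    fun ⟨h₁, h₂⟩ => hne (hN.eq_of_mem h₁ h₂ hi₁ hi₂)
  have := excl 0 s(Sum.inl u, Sum.inr 0) s(Sum.inr 0, Sum.inr 1) (by simp) (by simp) (by simp)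
  have := excl 0 s(Sum.inl u, Sum.inr 0) s(Sum.inr 0, Sum.inr 3) (by simp) (by simp) (by simp)
  have := excl 0 s(Sum.inr 0, Sum.inr 1) s(Sum.inr 0, Sum.inr 3) (by simp) (by simp) (by simp)
  have := excl 1 s(Sum.inr 0, Sum.inr 1) s(Sum.inr 1, Sum.inr 2) (by simp) (by simp) (by simp)
  have := excl 2 s(Sum.inr 1, Sum.inr 2) s(Sum.inr 2, Sum.inr 3) (by simp) (by simp) (by simp)
  have := excl 3 s(Sum.inr 2, Sum.inr 3) s(Sum.inr 3, Sum.inl v) (by simp) (by simp) (by simp)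
  have := excl 3 s(Sum.inr 2, Sum.inr 3) s(Sum.inr 0, Sum.inr 3) (by simp) (by simp) (by simp)
  have := excl 3 s(Sum.inr 3, Sum.inl v) s(Sum.inr 0, Sum.inr 3) (by simp) (by simp) (by simp)
  clear excl hN
  by_cases s(Sum.inl u, Sum.inr 0) ∈ N <;> by_cases s(Sum.inr 1, Sum.inr 2) ∈ N <;> simp_all

theorem IsPM.uw₁_mem_iff_w₄v_mem {N : Set (Sym2 (V ⊕ Fin 4))} (hN : IsPM (addSquare G u v) N) :
    s(Sum.inl u, Sum.inr 0) ∈ N ↔ s(Sum.inr 3, Sum.inl v) ∈ N :=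
  hN.gadget_edges_mem_iff.2.2.1.symm

theorem IsPM.w₂w₃_mem_of_uw₁_mem {N : Set (Sym2 (V ⊕ Fin 4))} (hN : IsPM (addSquare G u v) N)
    (hu : s(Sum.inl u, Sum.inr 0) ∈ N) : s(Sum.inr 1, Sum.inr 2) ∈ N :=
  hN.gadget_edges_mem_iff.2.2.2.2 hu

theorem IsPM.w₁w₂_mem_or_w₂w₃_mem {N : Set (Sym2 (V ⊕ Fin 4))}
    (hN : IsPM (addSquare G u v) N) :
    s(Sum.inr 0, Sum.inr 1) ∈ N ∨ s(Sum.inr 1, Sum.inr 2) ∈ N :=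
  hN.covers_new_vertices.2.1

theorem IsPM.inter_squareEdges_eq_of_iff {N N' : Set (Sym2 (V ⊕ Fin 4))}
    (hN : IsPM (addSquare G u v) N) (hN' : IsPM (addSquare G u v) N')
    (hu : s(Sum.inl u, Sum.inr 0) ∈ N ↔ s(Sum.inl u, Sum.inr 0) ∈ N')
    (h₂₃ : s(Sum.inr 1, Sum.inr 2) ∈ N ↔ s(Sum.inr 1, Sum.inr 2) ∈ N') :
    N ∩ squareEdges u v = N' ∩ squareEdges u v := by
  obtain ⟨h₁₂, h₃₄, h₄v, h₁₄, -⟩ := hN.gadget_edges_mem_iff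
  obtain ⟨h₁₂', h₃₄', h₄v', h₁₄', -⟩ := hN'.gadget_edges_mem_iff
  refine Set.ext fun e => and_congr_left fun he => ?_
  simp only [squareEdges, Set.mem_insert_iff, Set.mem_singleton_iff] at he
  rcases he with rfl | rfl | rfl | rfl | rfl | rfl
  · exact hu
  · rw [h₁₂, h₁₂', h₂₃]
  · exact h₂₃
  · rw [h₃₄, h₃₄', h₂₃]
  · rw [h₄v, h₄v', hu]
  · rw [h₁₄, h₁₄', h₂₃, hu]

theorem eq_of_inl_mem_of_mem_squareEdges {e : Sym2 (V ⊕ Fin 4)} {x : V}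
    (he : e ∈ squareEdges u v) (hx : Sum.inl x ∈ e) :
    (x = u ∧ e = s(Sum.inl u, Sum.inr 0)) ∨ (x = v ∧ e = s(Sum.inr 3, Sum.inl v)) := by
  simp only [squareEdges, Set.mem_insert_iff, Set.mem_singleton_iff] at he
  rcases he with rfl | rfl | rfl | rfl | rfl | rfl <;> simp_all

-- The gadget parts `{w₁w₄, w₂w₃}`, `{w₁w₂, w₃w₄}` and `{uw₁, w₂w₃, w₄v}` of perfect matchings.
def squareA : Set (Sym2 (V ⊕ Fin 4)) := {s(Sum.inr 0, Sum.inr 3), s(Sum.inr 1, Sum.inr 2)}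

def squareB : Set (Sym2 (V ⊕ Fin 4)) := {s(Sum.inr 0, Sum.inr 1), s(Sum.inr 2, Sum.inr 3)}

def squareC (u v : V) : Set (Sym2 (V ⊕ Fin 4)) :=
  {s(Sum.inl u, Sum.inr 0), s(Sum.inr 1, Sum.inr 2), s(Sum.inr 3, Sum.inl v)}

theorem squareA_subset_squareEdges (u v : V) : squareA ⊆ squareEdges u v := by
  simp [squareA, squareEdges, Set.insert_subset_iff]

theorem squareB_subset_squareEdges (u v : V) : squareB ⊆ squareEdges u v := by
  simp [squareB, squareEdges, Set.insert_subset_iff]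

theorem squareC_subset_squareEdges : squareC u v ⊆ squareEdges u v := by
  simp [squareC, squareEdges, Set.insert_subset_iff]

theorem notMem_image_union_squareA {P : Set (Sym2 V)} {e : Sym2 (V ⊕ Fin 4)}
    (he : e ∈ squareEdges u v) (heA : e ∉ squareA) : e ∉ Sym2.map Sum.inl '' P ∪ squareA := by
  rintro (⟨f, -, rfl⟩ | h)
  exacts [map_inl_notMem_squareEdges f he, heA h]

theorem isPM_addSquare_image_union_of_inr {P : Set (Sym2 V)} {T : Set (Sym2 (V ⊕ Fin 4))}
    (hP : IsPM G P) (huvP : s(u, v) ∉ P) (hT : T ⊆ squareEdges u v)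
    (hTinl : ∀ x : V, ∀ t ∈ T, Sum.inl x ∉ t) (hTcover : ∀ i, ∃ t ∈ T, Sum.inr i ∈ t)
    (hTuniq : ∀ y t₁ t₂, t₁ ∈ T → t₂ ∈ T → y ∈ t₁ → y ∈ t₂ → t₁ = t₂) :
    IsPM (addSquare G u v) (Sym2.map Sum.inl '' P ∪ T) := by
  refine isPM_of_exists_of_unique ?_ ?_ ?_
  · refine Set.union_subset ?_ (hT.trans squareEdges_subset_edgeSet_addSquare)
    rintro _ ⟨f, hf, rfl⟩
    exact map_inl_mem_edgeSet_addSquare.2 ⟨hP.1 hf, ne_of_mem_of_not_mem hf huvP⟩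
  · rintro (x | i)
    · obtain ⟨f, hf, hxf⟩ := hP.exists_mem x
      exact ⟨_, Or.inl ⟨f, hf, rfl⟩, by simpa using hxf⟩
    · obtain ⟨t, ht, hit⟩ := hTcover i
      exact ⟨t, Or.inr ht, hit⟩
  · rintro y _ _ (⟨f, hf, rfl⟩ | ht₁) (⟨g, hg, rfl⟩ | ht₂) hy₁ hy₂
    · obtain ⟨x, hxf, rfl⟩ := Sym2.mem_map.1 hy₁
      rw [hP.eq_of_mem hf hg hxf (by simpa using hy₂)]
    · obtain ⟨x, -, rfl⟩ := Sym2.mem_map.1 hy₁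
      exact (hTinl x _ ht₂ hy₂).elim
    · obtain ⟨x, -, rfl⟩ := Sym2.mem_map.1 hy₂
      exact (hTinl x _ ht₁ hy₁).elim
    · exact hTuniq y _ _ ht₁ ht₂ hy₁ hy₂

theorem isPM_addSquare_image_union_squareA {P : Set (Sym2 V)} (hP : IsPM G P)
    (huvP : s(u, v) ∉ P) : IsPM (addSquare G u v) (Sym2.map Sum.inl '' P ∪ squareA) := by
  refine isPM_addSquare_image_union_of_inr hP huvP (squareA_subset_squareEdges u v)
    (by simp [squareA])
    (by intro i; fin_cases i <;> simp [squareA]) ?_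
  rintro y t₁ t₂ (rfl | rfl) (rfl | rfl) h₁ h₂ <;> simp only [Sym2.mem_iff] at h₁ h₂ <;>
    rcases h₁ with rfl | rfl <;> simp at h₂ ⊢

theorem isPM_addSquare_image_union_squareB {P : Set (Sym2 V)} (hP : IsPM G P)
    (huvP : s(u, v) ∉ P) : IsPM (addSquare G u v) (Sym2.map Sum.inl '' P ∪ squareB) := by
  refine isPM_addSquare_image_union_of_inr hP huvP (squareB_subset_squareEdges u v)
    (by simp [squareB])
    (by intro i; fin_cases i <;> simp [squareB]) ?_
  rintro y t₁ t₂ (rfl | rfl) (rfl | rfl) h₁ h₂ <;> simp only [Sym2.mem_iff] at h₁ h₂ <;>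
    rcases h₁ with rfl | rfl <;> simp at h₂ ⊢

theorem isPM_addSquare_image_union_squareC {Q : Set (Sym2 V)} (hQ : IsPM G Q)
    (huvQ : s(u, v) ∈ Q) :
    IsPM (addSquare G u v) (Sym2.map Sum.inl '' (Q \ {s(u, v)}) ∪ squareC u v) := by
  have huv : u ≠ v := G.ne_of_adj (hQ.1 huvQ)
  have not_both {f t y} (hf : f ∈ Q \ {s(u, v)}) (ht : t ∈ squareC u v)
      (hyf : y ∈ Sym2.map Sum.inl f) (hyt : y ∈ t) : False := by
    obtain ⟨x, hxf, rfl⟩ := Sym2.mem_map.1 hyf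
    have hx : x ∈ s(u, v) := by
      rcases eq_of_inl_mem_of_mem_squareEdges (squareC_subset_squareEdges ht) hyt with
        ⟨rfl, -⟩ | ⟨rfl, -⟩ <;> simp
    exact hf.2 (hQ.eq_of_mem hf.1 huvQ hxf hx)
  refine isPM_of_exists_of_unique ?_ ?_ ?_
  · refine Set.union_subset ?_
      (squareC_subset_squareEdges.trans squareEdges_subset_edgeSet_addSquare)
    rintro _ ⟨f, ⟨hf, hfuv⟩, rfl⟩
    exact map_inl_mem_edgeSet_addSquare.2 ⟨hQ.1 hf, hfuv⟩
  · rintro (x | i)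
    · by_cases hx : x ∈ s(u, v)
      · rw [Sym2.mem_iff] at hx
        rcases hx with rfl | rfl
        · exact ⟨s(Sum.inl x, Sum.inr 0), Or.inr (by simp [squareC]), by simp⟩
        · exact ⟨s(Sum.inr 3, Sum.inl x), Or.inr (by simp [squareC]), by simp⟩
      · obtain ⟨f, hf, hxf⟩ := hQ.exists_mem x
        refine ⟨_, Or.inl ⟨f, ⟨hf, ?_⟩, rfl⟩, by simpa using hxf⟩
        rintro rfl
        exact hx hxf
    · fin_cases i <;> simp [squareC]
  · rintro y _ _ (⟨f, hf, rfl⟩ | ht₁) (⟨g, hg, rfl⟩ | ht₂) hy₁ hy₂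
    · obtain ⟨x, hxf, rfl⟩ := Sym2.mem_map.1 hy₁
      rw [hQ.eq_of_mem hf.1 hg.1 hxf (by simpa using hy₂)]
    · exact (not_both hf ht₂ hy₁ hy₂).elim
    · exact (not_both hg ht₁ hy₂ hy₁).elim
    · simp only [squareC, Set.mem_insert_iff, Set.mem_singleton_iff] at ht₁ ht₂
      rcases ht₁ with rfl | rfl | rfl <;> rcases ht₂ with rfl | rfl | rfl <;>
        simp only [Sym2.mem_iff] at hy₁ hy₂ <;> rcases hy₁ with rfl | rfl <;> simp_all

theorem eq_image_preimage_union_inter_squareEdges {N : Set (Sym2 (V ⊕ Fin 4))}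
    (hN : N ⊆ (addSquare G u v).edgeSet) :
    N = Sym2.map Sum.inl '' (Sym2.map Sum.inl ⁻¹' N) ∪ N ∩ squareEdges u v := by
  refine Set.Subset.antisymm (fun e he => ?_) ?_
  · rcases edgeSet_addSquare G u v ▸ hN he with ⟨f, -, rfl⟩ | hsq
    exacts [Or.inl ⟨f, he, rfl⟩, Or.inr ⟨he, hsq⟩]
  · rintro e (⟨f, hf, rfl⟩ | ⟨he, -⟩)
    exacts [hf, he]

/-- Contracting the gadget back to the edge `uv`: the matching uses `uv` exactly when `N`
matches `u` into the gadget. -/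
def baseMatching (u v : V) (N : Set (Sym2 (V ⊕ Fin 4))) : Set (Sym2 V) :=
  Sym2.map Sum.inl ⁻¹' N ∪ {f | f = s(u, v) ∧ s(Sum.inl u, Sum.inr 0) ∈ N}

theorem preimage_eq_baseMatching_diff {N : Set (Sym2 (V ⊕ Fin 4))}
    (hN : N ⊆ (addSquare G u v).edgeSet) :
    Sym2.map Sum.inl ⁻¹' N = baseMatching u v N \ {s(u, v)} := by
  ext f
  have hf : Sym2.map Sum.inl f ∈ N → f ≠ s(u, v) :=
    fun h => (map_inl_mem_edgeSet_addSquare.1 (hN h)).2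
  simp only [baseMatching, Set.mem_preimage, Set.mem_sdiff, Set.mem_union, Set.mem_ofPred_eq,
    Set.mem_singleton_iff]
  tauto

theorem uv_mem_baseMatching_iff {N : Set (Sym2 (V ⊕ Fin 4))}
    (hN : N ⊆ (addSquare G u v).edgeSet) :
    s(u, v) ∈ baseMatching u v N ↔ s(Sum.inl u, Sum.inr 0) ∈ N := by
  have : Sym2.map Sum.inl s(u, v) ∉ N :=
    fun h => (map_inl_mem_edgeSet_addSquare.1 (hN h)).2 rfl
  simp only [baseMatching, Set.mem_union, Set.mem_preimage, Set.mem_ofPred_eq, true_and]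
  tauto

theorem IsPM.eq_of_baseMatching_eq {N N' : Set (Sym2 (V ⊕ Fin 4))}
    (hN : IsPM (addSquare G u v) N) (hN' : IsPM (addSquare G u v) N')
    (hbase : baseMatching u v N = baseMatching u v N')
    (hsq : N ∩ squareEdges u v = N' ∩ squareEdges u v) : N = N' := by
  rw [eq_image_preimage_union_inter_squareEdges hN.1,
    eq_image_preimage_union_inter_squareEdges hN'.1, preimage_eq_baseMatching_diff hN.1,
    preimage_eq_baseMatching_diff hN'.1, hbase, hsq]

theorem IsPM.isPM_baseMatching (huv : G.Adj u v) {N : Set (Sym2 (V ⊕ Fin 4))}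
    (hN : IsPM (addSquare G u v) N) : IsPM G (baseMatching u v N) := by
  have not_both {x : V} {f : Sym2 V} (hf : Sym2.map Sum.inl f ∈ N) (hxf : x ∈ f)
      (hu : s(Sum.inl u, Sum.inr 0) ∈ N) (hx : x ∈ s(u, v)) : False := by
    have hv := hN.uw₁_mem_iff_w₄v_mem.1 hu
    rw [Sym2.mem_iff] at hx
    rcases hx with rfl | rfl
    · exact map_inl_notMem_squareEdges (u := x) (v := v) f <|
        hN.eq_of_mem (x := Sum.inl x) hf hu (by simpa using hxf) (by simp) ▸ by simp [squareEdges]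
    · exact map_inl_notMem_squareEdges (u := u) (v := x) f <|
        hN.eq_of_mem (x := Sum.inl x) hf hv (by simpa using hxf) (by simp) ▸ by simp [squareEdges]
  refine isPM_of_exists_of_unique ?_ (fun x => ?_) (fun x f g hf hg hxf hxg => ?_)
  · rintro f (hf | ⟨rfl, -⟩)
    exacts [(map_inl_mem_edgeSet_addSquare.1 (hN.1 hf)).1, huv]
  · obtain ⟨e, heN, hxe⟩ := hN.exists_mem (Sum.inl x)
    rcases edgeSet_addSquare G u v ▸ hN.1 heN with ⟨f, -, rfl⟩ | hsq
    · exact ⟨f, Or.inl heN, by simpa using hxe⟩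
    · rcases eq_of_inl_mem_of_mem_squareEdges hsq hxe with ⟨rfl, rfl⟩ | ⟨rfl, rfl⟩
      · exact ⟨s(x, v), Or.inr ⟨rfl, heN⟩, Sym2.mem_mk_left x v⟩
      · exact ⟨s(u, x), Or.inr ⟨rfl, hN.uw₁_mem_iff_w₄v_mem.2 heN⟩, Sym2.mem_mk_right u x⟩
  · rcases hf with hf | ⟨rfl, hu⟩ <;> rcases hg with hg | ⟨rfl, hu'⟩
    · exact Sym2.map.injective Sum.inl_injective
        (hN.eq_of_mem (x := Sum.inl x) hf hg (by simpa using hxf) (by simpa using hxg))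
    · exact (not_both hf hxf hu' hxg).elim
    · exact (not_both hg hxg hu hxf).elim
    · rfl

theorem isAntiForcingSet_addSquare (huv : G.Adj u v) {N T : Set (Sym2 (V ⊕ Fin 4))}
    {S : Set (Sym2 V)} (hN : IsPM (addSquare G u v) N)
    (hS : IsAntiForcingSet G (baseMatching u v N) S) (hT : T ⊆ squareEdges u v)
    (hTN : Disjoint T N)
    (huvS : s(u, v) ∈ S → ∀ N', IsPM (addSquare G u v) N' → Disjoint N' T →
      s(Sum.inl u, Sum.inr 0) ∉ N')
    (hsep : ∀ N', IsPM (addSquare G u v) N' → Disjoint N' T →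
      (s(Sum.inl u, Sum.inr 0) ∈ N ↔ s(Sum.inl u, Sum.inr 0) ∈ N') →
      (s(Sum.inr 1, Sum.inr 2) ∈ N ↔ s(Sum.inr 1, Sum.inr 2) ∈ N')) :
    IsAntiForcingSet (addSquare G u v) N (Sym2.map Sum.inl '' (S \ {s(u, v)}) ∪ T) := by
  obtain ⟨hSE, hSN, hSuniq⟩ := (hN.isPM_baseMatching huv).isAntiForcingSet_iff.1 hS
  refine hN.isAntiForcingSet_iff.2 ⟨?_, ?_, fun N' hN' hdisj => ?_⟩
  · refine Set.union_subset ?_ (hT.trans squareEdges_subset_edgeSet_addSquare)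
    rintro _ ⟨f, ⟨hfS, hfuv⟩, rfl⟩
    exact map_inl_mem_edgeSet_addSquare.2 ⟨hSE hfS, hfuv⟩
  · refine Set.disjoint_union_left.2 ⟨Set.disjoint_left.2 ?_, hTN⟩
    rintro _ ⟨f, ⟨hfS, -⟩, rfl⟩ hfN
    exact Set.disjoint_left.1 hSN hfS (Or.inl hfN)
  obtain ⟨hdisjS, hdisjT⟩ := Set.disjoint_union_right.1 hdisj
  have hbase : baseMatching u v N' = baseMatching u v N := by
    refine hSuniq _ (hN'.isPM_baseMatching huv) (Set.disjoint_left.2 ?_)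
    rintro f (hf | ⟨rfl, hu⟩) hfS
    · have hfuv : f ≠ s(u, v) := (map_inl_mem_edgeSet_addSquare.1 (hN'.1 hf)).2
      exact Set.disjoint_left.1 hdisjS hf ⟨f, ⟨hfS, hfuv⟩, rfl⟩
    · exact huvS hfS N' hN' hdisjT hu
  have hu : s(Sum.inl u, Sum.inr 0) ∈ N ↔ s(Sum.inl u, Sum.inr 0) ∈ N' := by
    rw [← uv_mem_baseMatching_iff hN'.1, ← uv_mem_baseMatching_iff hN.1, hbase]
  exact (hN'.eq_of_baseMatching_eq hN hbase
    (hN.inter_squareEdges_eq_of_iff hN' hu (hsep N' hN' hdisjT hu)).symm)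

theorem af_le_ncard_add_ncard [Finite V] {H : SimpleGraph (V ⊕ Fin 4)}
    {N T : Set (Sym2 (V ⊕ Fin 4))} {S : Set (Sym2 V)}
    (h : IsAntiForcingSet H N (Sym2.map Sum.inl '' S ∪ T)) : af H N ≤ S.ncard + T.ncard :=
  (af_le_ncard h).trans <| (Set.ncard_union_le _ _).trans <|
    Nat.add_le_add_right (Set.ncard_image_le (Set.toFinite _)) _

theorem af_addSquare_le [Finite V] (huv : G.Adj u v) {N : Set (Sym2 (V ⊕ Fin 4))}
    (hN : IsPM (addSquare G u v) N) :
    af (addSquare G u v) N ≤ af G (baseMatching u v N) + 1 := by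
  obtain ⟨S, hS, hScard⟩ := exists_isAntiForcingSet_ncard_eq_af (hN.isPM_baseMatching huv)
  have hdiff : (S \ {s(u, v)}).ncard ≤ S.ncard := Set.ncard_le_ncard Set.sdiff_subset
  rw [← hScard]
  by_cases hu : s(Sum.inl u, Sum.inr 0) ∈ N
  · have huvS : s(u, v) ∉ S := fun h =>
      Set.eq_empty_iff_forall_notMem.1 hS.2.1 _ ⟨h, (uv_mem_baseMatching_iff hN.1).2 hu⟩
    have h₁₄ : s(Sum.inr 0, Sum.inr 3) ∉ N := fun h => by
      simpa using hN.eq_of_mem (x := Sum.inr 0) hu h (by simp) (by simp)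
    refine (af_le_ncard_add_ncard <| isAntiForcingSet_addSquare (T := {s(Sum.inr 0, Sum.inr 3)})
      huv hN hS (by simp [squareEdges]) (Set.disjoint_singleton_left.2 h₁₄) (absurd · huvS)
      fun N' hN' _ hu' => ?_).trans (by simp [hdiff])
    exact iff_of_true (hN.w₂w₃_mem_of_uw₁_mem hu) (hN'.w₂w₃_mem_of_uw₁_mem (hu'.1 hu))
  by_cases h₂₃ : s(Sum.inr 1, Sum.inr 2) ∈ N
  · have h₁₂ : s(Sum.inr 0, Sum.inr 1) ∉ N := fun h => by
      simpa using hN.eq_of_mem (x := Sum.inr 1) h₂₃ h (by simp) (by simp)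
    have hsep (N' : Set (Sym2 (V ⊕ Fin 4))) (hN' : IsPM (addSquare G u v) N')
        (h₁₂' : s(Sum.inr 0, Sum.inr 1) ∉ N') :
        s(Sum.inr 1, Sum.inr 2) ∈ N ↔ s(Sum.inr 1, Sum.inr 2) ∈ N' :=
      iff_of_true h₂₃ (hN'.w₁w₂_mem_or_w₂w₃_mem.resolve_left h₁₂')
    by_cases huvS : s(u, v) ∈ S
    · refine (af_le_ncard_add_ncard <| isAntiForcingSet_addSquare
        (T := {s(Sum.inl u, Sum.inr 0), s(Sum.inr 0, Sum.inr 1)}) huv hN hS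
        (by simp [squareEdges, Set.insert_subset_iff]) (by simp [hu, h₁₂])
        (fun _ N' _ hdisj h => Set.disjoint_left.1 hdisj h (by simp))
        fun N' hN' hdisj _ => hsep N' hN' fun h => Set.disjoint_left.1 hdisj h (by simp)).trans ?_
      rw [Set.ncard_pair (by simp), ← Set.ncard_sdiff_singleton_add_one huvS]
    · refine (af_le_ncard_add_ncard <| isAntiForcingSet_addSquare (T := {s(Sum.inr 0, Sum.inr 1)})
        huv hN hS (by simp [squareEdges]) (Set.disjoint_singleton_left.2 h₁₂) (absurd · huvS)
        fun N' hN' hdisj _ => hsep N' hN' (by simpa using hdisj)).trans (by simp [hdiff])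
  · refine (af_le_ncard_add_ncard <| isAntiForcingSet_addSquare (T := {s(Sum.inr 1, Sum.inr 2)})
      huv hN hS (by simp [squareEdges]) (Set.disjoint_singleton_left.2 h₂₃) ?_
      fun N' hN' hdisj _ => ?_).trans (by simp [hdiff])
    · exact fun _ N' hN' hdisj hu' => Set.disjoint_singleton_right.1 hdisj
        (hN'.w₂w₃_mem_of_uw₁_mem hu')
    · exact iff_of_false h₂₃ (Set.disjoint_singleton_right.1 hdisj)

theorem preimage_image_union_of_subset_squareEdges {P : Set (Sym2 V)}
    {T : Set (Sym2 (V ⊕ Fin 4))} (hT : T ⊆ squareEdges u v) :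
    Sym2.map Sum.inl ⁻¹' (Sym2.map Sum.inl '' P ∪ T) = P := by
  rw [Set.preimage_union, Set.preimage_image_eq _ (Sym2.map.injective Sum.inl_injective),
    Set.preimage_eq_empty (Set.disjoint_left.2 ?_), Set.union_empty]
  rintro _ he ⟨f, rfl⟩
  exact map_inl_notMem_squareEdges f (hT he)

theorem ncard_preimage_add_ncard_le [Finite V] {S K : Set (Sym2 (V ⊕ Fin 4))}
    (hKS : K ⊆ S) (hK : K ⊆ squareEdges u v) :
    (Sym2.map Sum.inl ⁻¹' S).ncard + K.ncard ≤ S.ncard := by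
  rw [← Set.ncard_image_of_injective _ (Sym2.map.injective Sum.inl_injective),
    ← Set.ncard_union_eq (Set.disjoint_left.2 ?_)]
  · exact Set.ncard_le_ncard (Set.union_subset (Set.image_preimage_subset _ _) hKS)
  · rintro _ ⟨f, -, rfl⟩ hf
    exact map_inl_notMem_squareEdges f (hK hf)

section LowerBound

variable {M : Set (Sym2 V)} {Se : Set (Sym2 (V ⊕ Fin 4))}

theorem eq_of_disjoint_preimage (hM : IsPM G M) (heM : s(u, v) ∉ M)
    (hSe : IsAntiForcingSet (addSquare G u v) (Sym2.map Sum.inl '' M ∪ squareA) Se)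
    {M' : Set (Sym2 V)} (hM' : IsPM G M') (heM' : s(u, v) ∉ M')
    (hdisj : Disjoint M' (Sym2.map Sum.inl ⁻¹' Se)) : M' = M := by
  obtain ⟨-, hSeMe, huniq⟩ :=
    (isPM_addSquare_image_union_squareA hM heM).isAntiForcingSet_iff.1 hSe
  have h := huniq _ (isPM_addSquare_image_union_squareA hM' heM') <| by
    refine Set.disjoint_union_left.2 ⟨Set.disjoint_left.2 ?_, ?_⟩
    · rintro _ ⟨f, hf, rfl⟩
      exact Set.disjoint_left.1 hdisj hf
    · exact (hSeMe.mono_right Set.subset_union_right).symm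
  rw [← preimage_image_union_of_subset_squareEdges (P := M') (squareA_subset_squareEdges u v), h,
    preimage_image_union_of_subset_squareEdges (squareA_subset_squareEdges u v)]

theorem disjoint_preimage_of_isAntiForcingSet (hM : IsPM G M) (heM : s(u, v) ∉ M)
    (hSe : IsAntiForcingSet (addSquare G u v) (Sym2.map Sum.inl '' M ∪ squareA) Se) :
    Disjoint (Sym2.map Sum.inl ⁻¹' Se) M := by
  obtain ⟨-, hSeMe, -⟩ := (isPM_addSquare_image_union_squareA hM heM).isAntiForcingSet_iff.1 hSe
  exact Set.disjoint_left.2 fun f hfS hfM =>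
    Set.disjoint_left.1 hSeMe hfS (Or.inl ⟨f, hfM, rfl⟩)

theorem isAntiForcingSet_insert_preimage (huv : G.Adj u v) (hM : IsPM G M)
    (heM : s(u, v) ∉ M)
    (hSe : IsAntiForcingSet (addSquare G u v) (Sym2.map Sum.inl '' M ∪ squareA) Se) :
    IsAntiForcingSet G M (insert s(u, v) (Sym2.map Sum.inl ⁻¹' Se)) := by
  refine hM.isAntiForcingSet_iff.2 ⟨Set.insert_subset huv fun f hf => ?_,
    Set.disjoint_insert_left.2 ⟨heM, disjoint_preimage_of_isAntiForcingSet hM heM hSe⟩,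
    fun M' hM' hdisj => ?_⟩
  · exact (map_inl_mem_edgeSet_addSquare.1 (hSe.1 hf)).1
  · rw [Set.disjoint_insert_right] at hdisj
    exact eq_of_disjoint_preimage hM heM hSe hM' hdisj.1 hdisj.2

theorem isAntiForcingSet_preimage (hM : IsPM G M) (heM : s(u, v) ∉ M)
    (hSe : IsAntiForcingSet (addSquare G u v) (Sym2.map Sum.inl '' M ∪ squareA) Se)
    (hu : s(Sum.inl u, Sum.inr 0) ∉ Se) (hv : s(Sum.inr 3, Sum.inl v) ∉ Se) :
    IsAntiForcingSet G M (Sym2.map Sum.inl ⁻¹' Se) := by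
  obtain ⟨hSeE, hSeMe, huniq⟩ :=
    (isPM_addSquare_image_union_squareA hM heM).isAntiForcingSet_iff.1 hSe
  refine hM.isAntiForcingSet_iff.2 ⟨fun f hf => (map_inl_mem_edgeSet_addSquare.1 (hSeE hf)).1,
    disjoint_preimage_of_isAntiForcingSet hM heM hSe, fun M' hM' hdisj => ?_⟩
  by_cases huvM' : s(u, v) ∈ M'
  · have h₂₃ : s(Sum.inr 1, Sum.inr 2) ∉ Se :=
      fun h => Set.disjoint_left.1 hSeMe h (Or.inr (by simp [squareA]))
    have h := huniq _ (isPM_addSquare_image_union_squareC hM' huvM') <| by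
      refine Set.disjoint_union_left.2 ⟨Set.disjoint_left.2 ?_, ?_⟩
      · rintro _ ⟨f, hf, rfl⟩
        exact Set.disjoint_left.1 hdisj hf.1
      · simp [squareC, hu, hv, h₂₃]
    have hu₁ : s(Sum.inl u, Sum.inr 0) ∈ Sym2.map Sum.inl '' M ∪ squareA :=
      h ▸ Or.inr (by simp [squareC])
    exact (notMem_image_union_squareA (u := u) (v := v) (by simp [squareEdges])
      (by simp [squareA]) hu₁).elim
  · exact eq_of_disjoint_preimage hM heM hSe hM' huvM' hdisj

theorem exists_mem_squareB_of_isAntiForcingSet (hM : IsPM G M) (heM : s(u, v) ∉ M)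
    (hSe : IsAntiForcingSet (addSquare G u v) (Sym2.map Sum.inl '' M ∪ squareA) Se) :
    ∃ x ∈ Se, x ∈ squareB := by
  obtain ⟨-, hSeMe, huniq⟩ :=
    (isPM_addSquare_image_union_squareA hM heM).isAntiForcingSet_iff.1 hSe
  by_contra! h
  have hB := huniq _ (isPM_addSquare_image_union_squareB hM heM) <|
    Set.disjoint_union_left.2
      ⟨(hSeMe.mono_right Set.subset_union_left).symm, Set.disjoint_right.2 h⟩
  have h₁₂ : s(Sum.inr 0, Sum.inr 1) ∈ Sym2.map Sum.inl '' M ∪ squareA :=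
    hB ▸ Or.inr (by simp [squareB])
  exact notMem_image_union_squareA (u := u) (v := v) (by simp [squareEdges]) (by simp [squareA]) h₁₂

end LowerBound

theorem af_add_one_le_af_addSquare [Finite V] {M : Set (Sym2 V)} (huv : G.Adj u v)
    (hM : IsPM G M) (heM : s(u, v) ∉ M) :
    af G M + 1 ≤ af (addSquare G u v) (Sym2.map Sum.inl '' M ∪ squareA) := by
  have hMe := isPM_addSquare_image_union_squareA hM heM
  obtain ⟨Se, hSe, hcard⟩ := exists_isAntiForcingSet_ncard_eq_af hMe
  rw [← hcard]
  obtain ⟨x, hxSe, hx⟩ := exists_mem_squareB_of_isAntiForcingSet hM heM hSe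
  by_cases hC : s(Sum.inl u, Sum.inr 0) ∈ Se ∨ s(Sum.inr 3, Sum.inl v) ∈ Se
  · obtain ⟨y, hySe, hy⟩ : ∃ y ∈ Se, y = s(Sum.inl u, Sum.inr 0) ∨ y = s(Sum.inr 3, Sum.inl v) := by
      rcases hC with h | h
      exacts [⟨_, h, Or.inl rfl⟩, ⟨_, h, Or.inr rfl⟩]
    have hxy : x ≠ y := by
      simp only [squareB, Set.mem_insert_iff, Set.mem_singleton_iff] at hx
      rcases hx with rfl | rfl <;> rcases hy with rfl | rfl <;> simp
    calc af G M + 1 ≤ (insert s(u, v) (Sym2.map Sum.inl ⁻¹' Se)).ncard + 1 :=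
          Nat.add_le_add_right
            (af_le_ncard (isAntiForcingSet_insert_preimage huv hM heM hSe)) 1
      _ ≤ (Sym2.map Sum.inl ⁻¹' Se).ncard + ({x, y} : Set _).ncard := by
          rw [Set.ncard_pair hxy]
          exact Nat.add_le_add_right (Set.ncard_insert_le _ _) 1
      _ ≤ Se.ncard := ncard_preimage_add_ncard_le (Set.insert_subset hxSe (by simpa))
          (Set.insert_subset (squareB_subset_squareEdges u v hx)
            (by rcases hy with rfl | rfl <;> simp [squareEdges]))
  · rw [not_or] at hC
    calc af G M + 1 ≤ (Sym2.map Sum.inl ⁻¹' Se).ncard + ({x} : Set _).ncard := by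
          rw [Set.ncard_singleton]
          exact Nat.add_le_add_right
            (af_le_ncard (isAntiForcingSet_preimage hM heM hSe hC.1 hC.2)) 1
      _ ≤ Se.ncard := ncard_preimage_add_ncard_le (by simpa)
          (by simpa using squareB_subset_squareEdges u v hx)

end AddSquare

theorem statement_10_general {V : Type*} [Fintype V] (G : SimpleGraph V) (M : Set (Sym2 V))
    (hM : IsPM G M) (hmax : af G M = Af G)
    (u v : V) (huv : G.Adj u v) (heM : s(u, v) ∉ M) :
    IsPM (addSquare G u v)
        ((Sym2.map Sum.inl '' M) ∪ {s(Sum.inr 0, Sum.inr 3), s(Sum.inr 1, Sum.inr 2)}) ∧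
      Af (addSquare G u v) =
        af (addSquare G u v)
          ((Sym2.map Sum.inl '' M) ∪ {s(Sum.inr 0, Sum.inr 3), s(Sum.inr 1, Sum.inr 2)}) := by
  have hMe := isPM_addSquare_image_union_squareA hM heM
  refine ⟨hMe, le_antisymm ?_ (af_le_Af hMe)⟩
  refine Af_le fun N hN => ?_
  calc af (addSquare G u v) N ≤ af G (baseMatching u v N) + 1 := af_addSquare_le huv hN
    _ ≤ af G M + 1 := by rw [hmax]; grw [af_le_Af (hN.isPM_baseMatching huv)]
    _ ≤ _ := af_add_one_le_af_addSquare huv hM heM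

/-- Let `M` be a perfect matching of a connected graph `G` with `af(G,M) = Af(G)` and
let `e = uv` be an edge of `G` not in `M`. Then `M_e = M ∪ {w₁w₄, w₂w₃}` is a perfect
matching of `G_e` and `Af(G_e) = af(G_e, M_e)`. -/
theorem statement_10 {V : Type*} [Fintype V] (G : SimpleGraph V) (M : Set (Sym2 V))
    (hconn : G.Connected) (hM : IsPM G M) (hmax : af G M = Af G)
    (u v : V) (huv : G.Adj u v) (heM : s(u, v) ∉ M) :
    IsPM (addSquare G u v)
        ((Sym2.map Sum.inl '' M) ∪ {s(Sum.inr 0, Sum.inr 3), s(Sum.inr 1, Sum.inr 2)}) ∧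
      Af (addSquare G u v) =
        af (addSquare G u v)
          ((Sym2.map Sum.inl '' M) ∪ {s(Sum.inr 0, Sum.inr 3), s(Sum.inr 1, Sum.inr 2)}) :=
  statement_10_general G M hM hmax u v huv heM
end

section
/- Let G be a matching covered bipartite graph with at least four vertices. If G does not contain a conformal odd theta subgraph, then G has a Hamiltonian cycle. -/
/-- A connected graph with at least one edge is matching covered if every edge lies
in some perfect matching. -/
def MatchingCovered {V : Type*} (G : SimpleGraph V) : Prop :=
  G.Connected ∧ G.edgeSet.Nonempty ∧ ∀ e ∈ G.edgeSet, ∃ M, IsPM G M ∧ e ∈ M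

/-- `G` contains a conformal odd theta subgraph: a conformal subgraph consisting of two
vertices joined by three pairwise internally vertex-disjoint paths, each of odd length
at least `3`. -/
def HasConformalOddTheta {V : Type*} (G : SimpleGraph V) : Prop :=
  ∃ (u v : V) (P₁ P₂ P₃ : G.Walk u v),
    P₁.IsPath ∧ P₂.IsPath ∧ P₃.IsPath ∧
    Odd P₁.length ∧ Odd P₂.length ∧ Odd P₃.length ∧
    3 ≤ P₁.length ∧ 3 ≤ P₂.length ∧ 3 ≤ P₃.length ∧
    (∀ w, w ∈ P₁.support → w ∈ P₂.support → w = u ∨ w = v) ∧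
    (∀ w, w ∈ P₁.support → w ∈ P₃.support → w = u ∨ w = v) ∧
    (∀ w, w ∈ P₂.support → w ∈ P₃.support → w = u ∨ w = v) ∧
    Matchable (SimpleGraph.induce
      {x : V | x ∉ P₁.support ∧ x ∉ P₂.support ∧ x ∉ P₃.support} G)

/-
Fix a perfect matching `M` of `G`, encoded by its mate involution `g`, and take a longest cycle
`C` whose vertex set is closed under `g`; then `M` restricts to a perfect matching of `G - V(C)`.
Such cycles exist: an edge `xy ∉ M` lies in a perfect matching `M'`, and the `M'`/`M`-alternating
walk from `x` closes up into one. If `C` is not Hamiltonian, some edge `c₀y` leaves `C`. Follow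
the alternating walk that starts with the edge `c₀y` of a perfect matching `M'` and continues
along `M`, up to its first return to `C`, at `c_l`. It returns along an `M'`-edge, so its length
is odd, and since `G` is bipartite `l` is odd too. If `c_l` is a neighbour of `c₀` on `C`, the
walk replaces the edge `c₀c_l` and yields a longer `g`-closed cycle. Otherwise the walk and the
two arcs of `C` between `c₀` and `c_l` form a conformal odd theta.
-/

open Function Set SimpleGraph

section MatchingInvolution

variable {V : Type*}

structure IsMatchingInvolution (G : SimpleGraph V) (p : V → V) : Prop where
  involutive : Involutive p
  adj : ∀ v, G.Adj v (p v)

variable {G : SimpleGraph V}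

lemma IsMatchingInvolution.ne {p : V → V} (hp : IsMatchingInvolution G p) (v : V) : p v ≠ v :=
  (hp.adj v).ne'

lemma IsPM.exists_isMatchingInvolution {M : Set (Sym2 V)} (hM : IsPM G M) :
    ∃ p, IsMatchingInvolution G p ∧ ∀ v w, s(v, w) ∈ M → p v = w := by
  choose e he huniq using hM.2
  let p v := Sym2.Mem.other (he v).2
  have hpM : ∀ v, s(v, p v) ∈ M := fun v => (Sym2.other_spec (he v).2).symm ▸ (he v).1
  have hmate : ∀ v w, s(v, w) ∈ M → p v = w := fun v w h => Sym2.congr_right.mp <|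
    (Sym2.other_spec (he v).2).trans (huniq v _ ⟨h, Sym2.mem_mk_left v w⟩).symm
  refine ⟨p, ⟨fun v => hmate _ _ ?_, fun v => hM.1 (hpM v)⟩, hmate⟩
  rw [Sym2.eq_swap]
  exact hpM v

lemma MatchingCovered.exists_isMatchingInvolution (hG : MatchingCovered G) {x y : V}
    (hxy : G.Adj x y) : ∃ p, IsMatchingInvolution G p ∧ p x = y := by
  obtain ⟨M, hM, hxyM⟩ := hG.2.2 s(x, y) hxy
  obtain ⟨p, hp, hpM⟩ := hM.exists_isMatchingInvolution
  exact ⟨p, hp, hpM x y hxyM⟩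

lemma IsMatchingInvolution.matchable {p : V → V} (hp : IsMatchingInvolution G p) :
    Matchable G := by
  refine ⟨range fun v => s(v, p v), ?_, fun v => ⟨s(v, p v), ⟨⟨v, rfl⟩, Sym2.mem_mk_left _ _⟩, ?_⟩⟩
  · rintro _ ⟨v, rfl⟩
    exact hp.adj v
  · rintro _ ⟨⟨u, rfl⟩, hvu⟩
    rcases Sym2.mem_iff.mp hvu with rfl | rfl
    · rfl
    · rw [hp.involutive, Sym2.eq_swap]

lemma IsMatchingInvolution.matchable_induce {p : V → V} (hp : IsMatchingInvolution G p)
    {T : Set V} (hT : MapsTo p T T) : Matchable (G.induce T) :=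
  IsMatchingInvolution.matchable
    ⟨fun v => Subtype.ext (hp.involutive v), fun v => hp.adj v⟩ (p := hT.restrict p T T)

end MatchingInvolution

section AltSeq

variable {V : Type*} {f g : V → V} {v : V}

def altSeq (f g : V → V) (v : V) : ℕ → V
  | 0 => v
  | i + 1 => (if Even i then f else g) (altSeq f g v i)

lemma altSeq_succ_of_even {i : ℕ} (hi : Even i) : altSeq f g v (i + 1) = f (altSeq f g v i) := by
  simp [altSeq, hi]

lemma altSeq_succ_of_odd {i : ℕ} (hi : Odd i) : altSeq f g v (i + 1) = g (altSeq f g v i) := by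
  simp [altSeq, Nat.not_even_iff_odd.mpr hi]

lemma altSeq_periodic {d : ℕ} (hd : Even d) (h : altSeq f g v d = v) :
    Periodic (altSeq f g v) d := by
  intro i
  induction i with
  | zero => rw [zero_add]; exact h
  | succ i ih =>
    have hpar : Even (i + d) ↔ Even i := by simp [Nat.even_add, hd]
    simp only [altSeq, add_right_comm i 1 d, hpar, ih]

lemma mate_altSeq (hg : Involutive g) {i : ℕ} (hi : 0 < i) :
    g (altSeq f g v i) = altSeq f g v (i - 1) ∨ g (altSeq f g v i) = altSeq f g v (i + 1) := by
  rcases Nat.even_or_odd i with he | ho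
  · left
    obtain ⟨j, rfl⟩ : ∃ j, i = j + 1 := ⟨i - 1, by omega⟩
    rw [altSeq_succ_of_odd (by simpa [Nat.even_add_one] using he), hg, Nat.add_sub_cancel]
  · exact Or.inr (altSeq_succ_of_odd ho).symm

lemma altSeq_adj {G : SimpleGraph V} (hf : IsMatchingInvolution G f)
    (hg : IsMatchingInvolution G g) (i : ℕ) : G.Adj (altSeq f g v i) (altSeq f g v (i + 1)) := by
  rcases Nat.even_or_odd i with hi | hi
  · rw [altSeq_succ_of_even hi]
    exact hf.adj _
  · rw [altSeq_succ_of_odd hi]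
    exact hg.adj _

variable (hf : Involutive f) (hg : Involutive g)
include hf hg

lemma altSeq_eq_of_succ (i : ℕ) :
    altSeq f g v i = (if Even i then f else g) (altSeq f g v (i + 1)) := by
  by_cases hi : Even i <;> simp [altSeq, hi, hf _, hg _]

lemma altSeq_zero_eq_of_eq_add {d : ℕ} (hd : Even d) :
    ∀ a, altSeq f g v a = altSeq f g v (a + d) → altSeq f g v 0 = altSeq f g v d
  | 0, h => by simpa using h
  | a + 1, h => by
    refine altSeq_zero_eq_of_eq_add hd a ?_
    have hpar : Even (a + d) ↔ Even a := by simp [Nat.even_add, hd]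
    rw [altSeq_eq_of_succ hf hg a, altSeq_eq_of_succ hf hg (a + d), add_right_comm, ← h]
    simp only [hpar]

lemma altSeq_ne_add_of_odd (hf₀ : ∀ x, f x ≠ x) (hg₀ : ∀ x, g x ≠ x) {d : ℕ} (hd : Odd d)
    (a : ℕ) : altSeq f g v a ≠ altSeq f g v (a + d) := by
  obtain ⟨k, rfl⟩ := hd
  induction k generalizing a with
  | zero =>
    intro h
    simp only [altSeq] at h
    split_ifs at h
    · exact hf₀ _ h.symm
    · exact hg₀ _ h.symm
  | succ k ih =>
    intro h
    apply ih (a + 1)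
    have hpar : Even (a + (2 * k + 2)) ↔ Even a := by simp [Nat.even_add]
    rw [show a + 1 + (2 * k + 1) = a + (2 * k + 2) by ring,
      altSeq_eq_of_succ hf hg (a + (2 * k + 2)),
      show a + (2 * k + 2) + 1 = a + (2 * (k + 1) + 1) by ring, ← h]
    simp only [altSeq, hpar]

lemma altSeq_sub_of_eq (hf₀ : ∀ x, f x ≠ x) (hg₀ : ∀ x, g x ≠ x) {a b : ℕ} (hab : a ≤ b)
    (h : altSeq f g v a = altSeq f g v b) : Even (b - a) ∧ altSeq f g v (b - a) = v := by
  obtain ⟨d, rfl⟩ := Nat.exists_eq_add_of_le hab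
  rw [Nat.add_sub_cancel_left]
  have hd : Even d := by
    by_contra hd
    exact altSeq_ne_add_of_odd hf hg hf₀ hg₀ (Nat.not_even_iff_odd.mp hd) a h
  exact ⟨hd, (altSeq_zero_eq_of_eq_add hf hg hd a h).symm⟩

lemma altSeq_exists_return [Finite V] : ∃ q, 0 < q ∧ altSeq f g v (2 * q) = v := by
  obtain ⟨i, j, hij, h⟩ := Finite.exists_ne_map_eq_of_infinite fun i => altSeq f g v (2 * i)
  wlog hlt : i < j generalizing i j
  · exact this j i hij.symm h.symm (by omega)
  refine ⟨j - i, by omega, (altSeq_zero_eq_of_eq_add hf hg ⟨j - i, by ring⟩ (2 * i) ?_).symm⟩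
  rwa [← mul_add, Nat.add_sub_cancel' hlt.le]

end AltSeq

lemma exists_altSeq_ear {V : Type*} [Finite V] {G : SimpleGraph V} {f g : V → V} {S : Set V}
    {v : V} (hv : v ∈ S) (hf : IsMatchingInvolution G f) (hg : IsMatchingInvolution G g)
    (hS : MapsTo g S S) (hy : f v ∉ S) :
    ∃ r, Odd r ∧ 3 ≤ r ∧ altSeq f g v r ∈ S ∧ (∀ i, 0 < i → i < r → altSeq f g v i ∉ S) ∧
      InjOn (altSeq f g v) (Iic r) := by
  classical
  set w := altSeq f g v
  have hret : ∃ i, 0 < i ∧ w i ∈ S := by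
    obtain ⟨q, hq, hwq⟩ := altSeq_exists_return hf.involutive hg.involutive (v := v)
    exact ⟨2 * q, by omega, by rwa [show w (2 * q) = v from hwq]⟩
  obtain ⟨r, ⟨hr0, hrS⟩, hout⟩ : ∃ r, (0 < r ∧ w r ∈ S) ∧ ∀ i, 0 < i → i < r → w i ∉ S :=
    ⟨Nat.find hret, Nat.find_spec hret, fun i hi hir hiS => Nat.find_min hret hir ⟨hi, hiS⟩⟩
  have hr1 : r ≠ 1 := by
    rintro rfl
    exact hy (by simpa [w, altSeq] using hrS)
  -- The walk cannot enter `S` by a `g`-step, since `S` is closed under `g`.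
  have hr : Odd r := by
    by_contra he
    have hodd : Odd (r - 1) := Nat.Even.sub_odd hr0 (Nat.not_odd_iff_even.mp he) odd_one
    have hstep : w (r - 1 + 1) = g (w (r - 1)) := altSeq_succ_of_odd hodd
    rw [Nat.sub_add_cancel hr0] at hstep
    refine hout (r - 1) (by omega) (by omega) ?_
    rw [← hg.involutive (w (r - 1)), ← hstep]
    exact hS hrS
  refine ⟨r, hr, ?_, hrS, hout, ?_⟩
  · obtain ⟨k, rfl⟩ := hr
    omega
  · intro a ha b hb h
    wlog hab : a ≤ b generalizing a b
    · exact (this hb ha h.symm (by omega)).symm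
    obtain ⟨heven, hba⟩ := altSeq_sub_of_eq hf.involutive hg.involutive hf.ne hg.ne hab h
    by_contra hne
    have hrba : r ≤ b - a := not_lt.mp fun hlt =>
      hout (b - a) (by omega) hlt (by rwa [show w (b - a) = v from hba])
    have : b - a = r := by
      simp only [mem_Iic] at hb
      omega
    exact Nat.not_even_iff_odd.mpr hr (this ▸ heven)

namespace SimpleGraph

variable {V : Type*} {G : SimpleGraph V}

def seqWalk (G : SimpleGraph V) (f : ℕ → V) :
    (n : ℕ) → (∀ i < n, G.Adj (f i) (f (i + 1))) → G.Walk (f 0) (f n)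
  | 0, _ => .nil
  | n + 1, h => (seqWalk G f n fun i hi => h i (by omega)).concat (h n n.lt_add_one)

section SeqWalk

variable (f : ℕ → V) (n : ℕ) (h : ∀ i < n, G.Adj (f i) (f (i + 1)))

@[simp]
lemma length_seqWalk : (G.seqWalk f n h).length = n := by
  induction n with
  | zero => rfl
  | succ n ih => simp [seqWalk, ih]

lemma support_seqWalk : (G.seqWalk f n h).support = (List.range (n + 1)).map f := by
  induction n with
  | zero => rfl
  | succ n ih => simp [seqWalk, ih, List.range_succ (n := n + 1)]

lemma mem_support_seqWalk {x : V} : x ∈ (G.seqWalk f n h).support ↔ x ∈ f '' Iic n := by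
  simp [support_seqWalk]

lemma isPath_seqWalk (hf : InjOn f (Iic n)) : (G.seqWalk f n h).IsPath := by
  rw [Walk.isPath_def, support_seqWalk]
  refine List.Nodup.map_on (fun i hi j hj hij => hf ?_ ?_ hij) List.nodup_range
  · simpa [Nat.lt_succ_iff] using hi
  · simpa [Nat.lt_succ_iff] using hj

end SeqWalk

lemma Colorable.even_length_iff (hG : G.Colorable 2) {u v : V} (p q : G.Walk u v) :
    Even p.length ↔ Even q.length := by
  obtain ⟨C⟩ := hG
  let C' := G.recolorOfEquiv finTwoEquiv C
  rw [C'.even_length_iff_congr p, C'.even_length_iff_congr q]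

lemma Colorable.even_iff_even_of_adj_seq (hG : G.Colorable 2) {z z' : ℕ → V} {m m' : ℕ}
    (hz : ∀ i < m, G.Adj (z i) (z (i + 1))) (hz' : ∀ i < m', G.Adj (z' i) (z' (i + 1)))
    (h₀ : z 0 = z' 0) (h₁ : z m = z' m') : Even m ↔ Even m' := by
  simpa using hG.even_length_iff ((G.seqWalk z m hz).copy h₀ h₁) (G.seqWalk z' m' hz')

lemma Preconnected.exists_adj_mem_notMem (hG : G.Preconnected) {S : Set V} {u v : V}
    (hu : u ∈ S) (hv : v ∉ S) : ∃ x ∈ S, ∃ y ∉ S, G.Adj x y := by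
  obtain ⟨p⟩ := hG u v
  obtain ⟨d, -, hd₁, hd₂⟩ := p.exists_boundary_dart S hu hv
  exact ⟨d.fst, hd₁, d.snd, hd₂, d.adj⟩

end SimpleGraph

section CycleSeq

variable {V : Type*} {G : SimpleGraph V} {n : ℕ} {c : ℕ → V}

/-- A cycle of length `n` of `G`, listed as an `n`-periodic sequence of its vertices. -/
structure IsCycleSeq (G : SimpleGraph V) (n : ℕ) (c : ℕ → V) : Prop where
  three_le : 3 ≤ n
  periodic : Periodic c n
  injOn : InjOn c (Iio n)
  adj : ∀ i, G.Adj (c i) (c (i + 1))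

lemma isCycleSeq_mod {z : ℕ → V} (hn : 3 ≤ n) (hz : z n = z 0)
    (hadj : ∀ i < n, G.Adj (z i) (z (i + 1))) (hinj : InjOn z (Iio n)) :
    IsCycleSeq G n (fun i => z (i % n)) where
  three_le := hn
  periodic i := by simp
  injOn a ha b hb h := by
    simp only [Nat.mod_eq_of_lt (mem_Iio.mp ha), Nat.mod_eq_of_lt (mem_Iio.mp hb)] at h
    exact hinj ha hb h
  adj i := by
    have hi := Nat.mod_lt i (by omega : 0 < n)
    rw [← Nat.mod_add_mod]
    rcases (by omega : i % n + 1 < n ∨ i % n + 1 = n) with h | h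
    · rw [Nat.mod_eq_of_lt h]
      exact hadj _ hi
    · rw [h, Nat.mod_self, ← hz]
      simpa [h] using hadj _ hi

lemma range_mod {z : ℕ → V} (hn : 0 < n) : range (fun i => z (i % n)) = z '' Iio n := by
  ext x
  constructor
  · rintro ⟨i, rfl⟩
    exact ⟨i % n, Nat.mod_lt i hn, rfl⟩
  · rintro ⟨i, hi, rfl⟩
    exact ⟨i, show z (i % n) = z i by rw [Nat.mod_eq_of_lt hi]⟩

/-- The cycle `c` with its edge `c 0 c 1` replaced by a path `w` from `w 0 = c 0`
to `w r = c 1`. -/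
def spliceSeq (c w : ℕ → V) (r t : ℕ) : V :=
  if t < r then w t else c (t + 1 - r)

lemma spliceSeq_of_lt {c w : ℕ → V} {r t : ℕ} (ht : t < r) : spliceSeq c w r t = w t :=
  if_pos ht

lemma spliceSeq_of_ge {c w : ℕ → V} {r t : ℕ} (ht : r ≤ t) : spliceSeq c w r t = c (t + 1 - r) :=
  if_neg (not_lt.mpr ht)

namespace IsCycleSeq

variable (hc : IsCycleSeq G n c)
include hc

lemma pos : 0 < n := by
  have := hc.three_le
  omega

lemma mod_eq_of_eq {i j : ℕ} (h : c i = c j) : i % n = j % n :=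
  hc.injOn (Nat.mod_lt _ hc.pos) (Nat.mod_lt _ hc.pos)
    (by rw [hc.periodic.map_mod_nat, hc.periodic.map_mod_nat, h])

lemma injOn_Ico (a : ℕ) : InjOn c (Ico a (a + n)) := fun i hi j hj h => by
  refine Nat.ModEq.eq_of_abs_lt (hc.mod_eq_of_eq h) ?_
  simp only [mem_Ico] at hi hj
  rw [abs_sub_lt_iff]
  omega

lemma exists_lt_eq {x : V} (hx : x ∈ range c) : ∃ i < n, c i = x := by
  obtain ⟨i, rfl⟩ := hx
  exact ⟨i % n, Nat.mod_lt _ hc.pos, hc.periodic.map_mod_nat i⟩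

lemma le_card [Finite V] : n ≤ Nat.card V := by
  simpa using Nat.card_le_card_of_injective (fun i : Fin n => c i)
    fun a b h => Fin.ext (hc.injOn a.2 b.2 h)

lemma even_of_colorable (hG : G.Colorable 2) : Even n := by
  have hcl : c n = c 0 := by rw [← zero_add n, hc.periodic]
  simpa using hG.even_length_iff ((G.seqWalk c n fun i _ => hc.adj i).copy rfl hcl) .nil

lemma rotate (j : ℕ) : IsCycleSeq G n (fun i => c (j + i)) where
  three_le := hc.three_le
  periodic i := by simp only [← add_assoc, hc.periodic (j + i)]
  injOn a ha b hb h := by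
    have := hc.injOn_Ico j ⟨by omega, by simpa using ha⟩ ⟨by omega, by simpa using hb⟩ h
    omega
  adj i := hc.adj (j + i)

lemma range_rotate (j : ℕ) : range (fun i => c (j + i)) = range c := by
  refine (range_comp_subset_range _ _).antisymm ?_
  rintro _ ⟨i, rfl⟩
  have hj : j ≤ n * j := Nat.le_mul_of_pos_left j hc.pos
  exact ⟨n * j + i - j, show c (j + (n * j + i - j)) = c i by
    rw [show j + (n * j + i - j) = i + n * j by omega, mul_comm]
    exact hc.periodic.nat_mul j i⟩

lemma exists_isCycle : ∃ C : G.Walk (c 0) (c 0), C.IsCycle ∧ ∀ i, c i ∈ C.support := by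
  have hn := hc.three_le
  have hcl : c (n - 1 + 1) = c 0 := by
    rw [Nat.sub_add_cancel hc.pos, ← zero_add n, hc.periodic]
  let P := (G.seqWalk (fun i => c (i + 1)) (n - 1) fun i _ => hc.adj (i + 1)).copy rfl hcl
  have hP : ∀ x, x ∈ P.support ↔ x ∈ (fun i => c (i + 1)) '' Iic (n - 1) := by
    intro x
    simp only [P, Walk.support_copy, mem_support_seqWalk]
  refine ⟨.cons (hc.adj 0) P, ?_, fun i => ?_⟩
  · rw [Walk.isCycle_iff_isPath_tail_and_le_length]
    refine ⟨?_, by simp [P]; omega⟩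
    have hPpath : P.IsPath := by
      rw [Walk.isPath_copy]
      refine isPath_seqWalk _ _ _ fun a ha b hb h => ?_
      have := hc.injOn_Ico 1 ⟨by omega, by simp at ha; omega⟩ ⟨by omega, by simp at hb; omega⟩ h
      omega
    simpa using hPpath
  · rw [Walk.support_cons, List.mem_cons, hP, ← hc.periodic.map_mod_nat]
    rcases Nat.eq_zero_or_pos (i % n) with h | h
    · exact Or.inl (by rw [h])
    · exact Or.inr ⟨i % n - 1, by have := Nat.mod_lt i hc.pos; simp; omega,
        by simp only; rw [Nat.sub_add_cancel h]⟩

lemma injOn_spliceSeq {w : ℕ → V} {r : ℕ} (hw0 : w 0 = c 0) (hinj : InjOn w (Iic r))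
    (hout : ∀ i, 0 < i → i < r → w i ∉ range c) : InjOn (spliceSeq c w r) (Iio (r + n - 1)) := by
  intro t ht t' ht' h
  simp only [mem_Iio] at ht ht'
  wlog htt : t ≤ t' generalizing t t'
  · exact (this h.symm ht' ht (by omega)).symm
  rcases lt_or_ge t' r with htr | htr
  · rw [spliceSeq_of_lt (by omega), spliceSeq_of_lt htr] at h
    exact hinj (by simp; omega) (by simp; omega) h
  rw [spliceSeq_of_ge htr] at h
  rcases lt_or_ge t r with htr' | htr'
  · rw [spliceSeq_of_lt htr'] at h
    rcases Nat.eq_zero_or_pos t with rfl | ht0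
    · rw [hw0] at h
      have := hc.injOn (show 0 < n by omega) (show t' + 1 - r < n by omega) h
      omega
    · exact absurd ⟨_, h.symm⟩ (hout t ht0 htr')
  · rw [spliceSeq_of_ge htr'] at h
    have := hc.injOn (show t + 1 - r < n by omega) (show t' + 1 - r < n by omega) h
    omega

lemma splice {w : ℕ → V} {r : ℕ} (hr : 2 ≤ r) (hw0 : w 0 = c 0) (hwr : w r = c 1)
    (hadj : ∀ i < r, G.Adj (w i) (w (i + 1))) (hinj : InjOn w (Iic r))
    (hout : ∀ i, 0 < i → i < r → w i ∉ range c) :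
    ∃ c', IsCycleSeq G (r + n - 1) c' ∧ range c' = range c ∪ w '' Iic r := by
  have hn := hc.three_le
  have hzw : ∀ t ≤ r, spliceSeq c w r t = w t := fun t ht => by
    rcases ht.lt_or_eq with ht | rfl
    · exact spliceSeq_of_lt ht
    · simp [spliceSeq_of_ge, hwr]
  have hz : spliceSeq c w r (r + n - 1) = spliceSeq c w r 0 := by
    rw [spliceSeq_of_ge (by omega), hzw 0 (by omega), hw0,
      show r + n - 1 + 1 - r = 0 + n by omega, hc.periodic]
  have hzadj : ∀ t < r + n - 1, G.Adj (spliceSeq c w r t) (spliceSeq c w r (t + 1)) :=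
    fun t ht => by
    rcases lt_or_ge t r with htr | htr
    · rw [hzw t htr.le, hzw (t + 1) htr]
      exact hadj t htr
    · rw [spliceSeq_of_ge htr, spliceSeq_of_ge (by omega),
        show t + 1 + 1 - r = t + 1 - r + 1 by omega]
      exact hc.adj _
  refine ⟨_, isCycleSeq_mod (by omega) hz hzadj (hc.injOn_spliceSeq hw0 hinj hout), ?_⟩
  rw [range_mod (by omega)]
  ext x
  constructor
  · rintro ⟨t, ht, rfl⟩
    rcases lt_or_ge t r with htr | htr
    · exact .inr ⟨t, htr.le, (spliceSeq_of_lt htr).symm⟩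
    · exact .inl ⟨_, (spliceSeq_of_ge htr).symm⟩
  · rintro (hx | ⟨t, ht, rfl⟩)
    · obtain ⟨i, hi, rfl⟩ := hc.exists_lt_eq hx
      rcases Nat.eq_zero_or_pos i with rfl | hi0
      · exact ⟨0, by simp; omega, by rw [hzw 0 (by omega), hw0]⟩
      · exact ⟨i + r - 1, by simp; omega, by rw [spliceSeq_of_ge (by omega)]; congr 1; omega⟩
    · exact ⟨t, by simp at ht ⊢; omega, hzw t ht⟩

lemma splice_of_add_one_eq {w : ℕ → V} {r l : ℕ} (hl : l + 1 = n) (hr : 2 ≤ r)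
    (hw0 : w 0 = c 0) (hwr : w r = c l) (hadj : ∀ i < r, G.Adj (w i) (w (i + 1)))
    (hinj : InjOn w (Iic r)) (hout : ∀ i, 0 < i → i < r → w i ∉ range c) :
    ∃ c', IsCycleSeq G (r + n - 1) c' ∧ range c' = range c ∪ w '' Iic r := by
  have hrev : (fun t => w (r - t)) '' Iic r = w '' Iic r := by
    ext x
    constructor <;> rintro ⟨t, ht, rfl⟩ <;> simp only [mem_Iic] at ht <;>
      exact ⟨r - t, by simp only [mem_Iic]; omega, by simp only [Nat.sub_sub_self ht]⟩
  rw [← hc.range_rotate l, ← hrev]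
  refine (hc.rotate l).splice hr (by simpa using hwr) ?_ (fun i hi => ?_) (fun a ha b hb h => ?_)
    (fun i hi0 hir => by rw [hc.range_rotate]; exact hout _ (by omega) (by omega))
  · show w (r - r) = c (l + 1)
    rw [Nat.sub_self, hl, ← zero_add n, hc.periodic, hw0]
  · simpa [show r - i = r - (i + 1) + 1 by omega] using (hadj _ (by omega)).symm
  · simp only [mem_Iic] at ha hb
    have := hinj (show r - a ∈ Iic r by simp) (show r - b ∈ Iic r by simp) h
    omega

lemma exists_arcs {l : ℕ} (hl0 : 0 < l) (hln : l < n) :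
    ∃ P Q : G.Walk (c 0) (c l), P.IsPath ∧ Q.IsPath ∧ P.length = l ∧ Q.length = n - l ∧
      (∀ x ∈ P.support, x ∈ Q.support → x = c 0 ∨ x = c l) ∧
      ∀ x, x ∈ P.support ∨ x ∈ Q.support ↔ x ∈ range c := by
  have hcl : c (l + (n - l)) = c 0 := by
    rw [Nat.add_sub_cancel' hln.le, ← zero_add n, hc.periodic]
  let P := G.seqWalk c l fun i _ => hc.adj i
  let Q := (G.seqWalk (fun t => c (l + t)) (n - l) fun t _ => hc.adj (l + t)).reverse.copy hcl rfl
  have hP : ∀ x, x ∈ P.support ↔ ∃ i ≤ l, c i = x := fun x => by simp [P, mem_support_seqWalk]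
  have hQ : ∀ x, x ∈ Q.support ↔ ∃ t ≤ n - l, c (l + t) = x := fun x => by
    simp [Q, mem_support_seqWalk]
  refine ⟨P, Q, isPath_seqWalk _ _ _ fun i hi j hj h => hc.injOn ?_ ?_ h, ?_, by simp [P],
    by simp [Q], ?_, fun x => ?_⟩
  · simp only [mem_Iic, mem_Iio] at hi ⊢
    omega
  · simp only [mem_Iic, mem_Iio] at hj ⊢
    omega
  · rw [Walk.isPath_copy, Walk.isPath_reverse_iff]
    refine isPath_seqWalk _ _ _ fun i hi j hj h => ?_
    simp only [mem_Iic] at hi hj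
    have := hc.injOn_Ico 1 ⟨by omega, by omega⟩ ⟨by omega, by omega⟩ h
    omega
  · rintro x hxP hxQ
    obtain ⟨i, hi, rfl⟩ := (hP x).mp hxP
    obtain ⟨t, ht, h⟩ := (hQ _).mp hxQ
    rcases (by omega : l + t = n ∨ l + t < n) with h' | h'
    · left
      rw [← h, h', ← zero_add n, hc.periodic]
    · have := hc.injOn (show l + t < n from h') (show i < n by omega) h
      right
      congr 1
      omega
  · rw [hP, hQ]
    constructor
    · rintro (⟨i, -, rfl⟩ | ⟨t, -, rfl⟩) <;> exact mem_range_self _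
    · intro hx
      obtain ⟨i, hi, rfl⟩ := hc.exists_lt_eq hx
      rcases le_or_gt i l with h | h
      · exact Or.inl ⟨i, h, rfl⟩
      · exact Or.inr ⟨i - l, by omega, by rw [Nat.add_sub_cancel' h.le]⟩

end IsCycleSeq

end CycleSeq

section MateClosedCycles

variable {V : Type*} {G : SimpleGraph V} {n : ℕ} {c : ℕ → V} {f g : V → V}

lemma IsCycleSeq.hasConformalOddTheta (hc : IsCycleSeq G n c) (hn : Even n)
    (hg : IsMatchingInvolution G g) {w : ℕ → V} {r l : ℕ} (hr : Odd r) (hr3 : 3 ≤ r)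
    (hl : Odd l) (hl3 : 3 ≤ l) (hln : l + 3 ≤ n) (hw0 : w 0 = c 0) (hwr : w r = c l)
    (hadj : ∀ i < r, G.Adj (w i) (w (i + 1))) (hinj : InjOn w (Iic r))
    (hout : ∀ i, 0 < i → i < r → w i ∉ range c)
    (hU : MapsTo g (range c ∪ w '' Iic r) (range c ∪ w '' Iic r)) :
    HasConformalOddTheta G := by
  obtain ⟨P₂, P₃, hP₂, hP₃, hlen₂, hlen₃, h₂₃, hcov⟩ :=
    hc.exists_arcs (l := l) (by omega) (by omega)
  let P₁ : G.Walk (c 0) (c l) := (G.seqWalk w r hadj).copy hw0 hwr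
  have h₁ : ∀ x, x ∈ P₁.support ↔ x ∈ w '' Iic r := fun x => by simp [P₁, mem_support_seqWalk]
  have h₁c : ∀ x ∈ P₁.support, x ∈ range c → x = c 0 ∨ x = c l := by
    intro x hx hxc
    obtain ⟨i, hi, rfl⟩ := (h₁ x).mp hx
    rcases Nat.eq_zero_or_pos i with rfl | hi0
    · exact Or.inl hw0
    rcases (mem_Iic.mp hi).lt_or_eq with hir | rfl
    · exact absurd hxc (hout i hi0 hir)
    · exact Or.inr hwr
  have hT : {x | x ∉ P₁.support ∧ x ∉ P₂.support ∧ x ∉ P₃.support} =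
      (range c ∪ w '' Iic r)ᶜ := by
    ext x
    simp only [mem_ofPred_eq, mem_compl_iff, mem_union, h₁, ← hcov]
    tauto
  refine ⟨c 0, c l, P₁, P₂, P₃, ?_, hP₂, hP₃, ?_, ?_, ?_, ?_, ?_, ?_,
    fun x h₁ h₂ => h₁c x h₁ ((hcov x).mp (.inl h₂)),
    fun x h₁ h₃ => h₁c x h₁ ((hcov x).mp (.inr h₃)), h₂₃, ?_⟩
  · rw [Walk.isPath_copy]
    exact isPath_seqWalk _ _ _ hinj
  · simpa [P₁] using hr
  · rwa [hlen₂]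
  · rw [hlen₃]
    exact Nat.Even.sub_odd (by omega) hn hl
  · simp [P₁, hr3]
  · omega
  · omega
  · rw [hT]
    exact hg.matchable_induce fun x hx hgx => hx (hg.involutive x ▸ hU hgx)

theorem IsCycleSeq.exists_longer_or_hasConformalOddTheta [Finite V] (hc : IsCycleSeq G n c)
    (hbip : G.Colorable 2) (hf : IsMatchingInvolution G f) (hg : IsMatchingInvolution G g)
    (hcg : MapsTo g (range c) (range c)) (hy : f (c 0) ∉ range c) :
    (∃ n' c', n < n' ∧ IsCycleSeq G n' c' ∧ MapsTo g (range c') (range c')) ∨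
      HasConformalOddTheta G := by
  obtain ⟨r, hr, hr3, hrc, hout, hinj⟩ := exists_altSeq_ear (mem_range_self 0) hf hg hcg hy
  set w := altSeq f g (c 0)
  obtain ⟨l, hln, hwl⟩ := hc.exists_lt_eq hrc
  have hadj : ∀ i < r, G.Adj (w i) (w (i + 1)) := fun i _ => altSeq_adj hf hg i
  have hU : MapsTo g (range c ∪ w '' Iic r) (range c ∪ w '' Iic r) := by
    rintro _ (hx | ⟨t, ht, rfl⟩)
    · exact .inl (hcg hx)
    rcases Nat.eq_zero_or_pos t with rfl | ht0
    · exact .inl (hcg (mem_range_self 0))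
    rcases (mem_Iic.mp ht).lt_or_eq with htr | rfl
    · rcases mate_altSeq hg.involutive ht0 with h | h <;> rw [h] <;>
        exact .inr ⟨_, by simp only [mem_Iic]; omega, rfl⟩
    · exact .inl (hcg hrc)
  have hn := hc.even_of_colorable hbip
  have hl : Odd l := by
    rw [← Nat.not_even_iff_odd, hbip.even_iff_even_of_adj_seq (fun i _ => hc.adj i) hadj rfl hwl,
      Nat.not_even_iff_odd]
    exact hr
  have hn2 := Nat.even_iff.mp hn
  have hl2 := Nat.odd_iff.mp hl
  rcases (by omega : l = 1 ∨ l + 1 = n ∨ (3 ≤ l ∧ l + 3 ≤ n)) with rfl | hl1 | ⟨hl3, hln3⟩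
  · obtain ⟨c', hc', hrange⟩ := hc.splice (w := w) (by omega) rfl hwl.symm hadj hinj hout
    exact .inl ⟨_, c', by omega, hc', hrange ▸ hU⟩
  · obtain ⟨c', hc', hrange⟩ :=
      hc.splice_of_add_one_eq (w := w) hl1 (by omega) rfl hwl.symm hadj hinj hout
    exact .inl ⟨_, c', by omega, hc', hrange ▸ hU⟩
  · exact .inr <|
      hc.hasConformalOddTheta (w := w) hn hg hr hr3 hl hl3 hln3 rfl hwl.symm hadj hinj hout hU

lemma exists_isCycleSeq_mapsTo [Fintype V] (hG : MatchingCovered G) (hV : 2 < Fintype.card V)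
    (hg : IsMatchingInvolution G g) : ∃ n c, IsCycleSeq G n c ∧ MapsTo g (range c) (range c) := by
  classical
  obtain ⟨v⟩ : Nonempty V := Fintype.card_pos_iff.mp (by omega)
  obtain ⟨b, -, hb⟩ := Finset.exists_mem_notMem_of_card_lt_card (s := {v, g v}) (t := .univ)
    (Finset.card_le_two.trans_lt (by simpa using hV))
  obtain ⟨x, hx, y, hy, hxy⟩ := hG.1.preconnected.exists_adj_mem_notMem (S := {v, g v})
    (mem_insert v _) (by simpa using hb)
  have hgy : g y ≠ x := by
    rintro rfl
    rcases hx with h | h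
    · exact hy (.inr (mem_singleton_iff.mpr (by rw [← h, hg.involutive])))
    · exact hy (.inl (by rw [← hg.involutive y, mem_singleton_iff.mp h, hg.involutive]))
  obtain ⟨f, hf, hfx⟩ := hG.exists_isMatchingInvolution hxy
  set w := altSeq f g x
  have hret := altSeq_exists_return hf.involutive hg.involutive (v := x)
  obtain ⟨q, ⟨hq0, hwq⟩, hmin⟩ :
      ∃ q, (0 < q ∧ w (2 * q) = x) ∧ ∀ k, 0 < k → k < q → w (2 * k) ≠ x :=
    ⟨Nat.find hret, Nat.find_spec hret, fun k hk hkq hwk => Nat.find_min hret hkq ⟨hk, hwk⟩⟩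
  have hq1 : q ≠ 1 := by
    rintro rfl
    exact hgy (by simpa [w, altSeq, hfx] using hwq)
  have hper := altSeq_periodic (f := f) (g := g) ⟨q, two_mul q⟩ hwq
  refine ⟨2 * q, w, ⟨by omega, hper, ?_, altSeq_adj hf hg⟩, ?_⟩
  · intro a ha b hb h
    simp only [mem_Iio] at ha hb
    wlog hab : a ≤ b generalizing a b
    · exact (this h.symm hb ha (by omega)).symm
    obtain ⟨⟨k, hk⟩, hba⟩ := altSeq_sub_of_eq hf.involutive hg.involutive hf.ne hg.ne hab h
    by_contra hne
    exact hmin k (by omega) (by omega) (by rwa [two_mul, ← hk])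
  · rintro _ ⟨i, rfl⟩
    rw [← show w (i + 2 * q) = w i from hper i]
    rcases mate_altSeq hg.involutive (f := f) (v := x) (i := i + 2 * q) (by omega) with h | h <;>
      rw [h] <;> exact mem_range_self _

end MateClosedCycles

/-- A matching covered bipartite graph with at least four vertices containing no
conformal odd theta subgraph has a Hamiltonian cycle. -/
theorem statement_14 {V : Type*} [Fintype V] (G : SimpleGraph V)
    (hmc : MatchingCovered G) (hbip : G.Colorable 2) (hcard : 4 ≤ Fintype.card V)
    (htheta : ¬ HasConformalOddTheta G) :
    ∃ (a : V) (C : G.Walk a a), C.IsCycle ∧ ∀ v : V, v ∈ C.support := by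
  obtain ⟨e, he⟩ := hmc.2.1
  obtain ⟨M, hM, -⟩ := hmc.2.2 e he
  obtain ⟨g, hg, -⟩ := hM.exists_isMatchingInvolution
  let K := {n | ∃ c, IsCycleSeq G n c ∧ MapsTo g (range c) (range c)}
  have hK : K.Nonempty := exists_isCycleSeq_mapsTo hmc (by omega) hg
  have hKbdd : BddAbove K := ⟨Nat.card V, fun n ⟨c, hc, _⟩ => hc.le_card⟩
  obtain ⟨c, hc, hcg⟩ := Nat.sSup_mem hK hKbdd
  by_cases hspan : range c = univ
  · obtain ⟨C, hC, hsupp⟩ := hc.exists_isCycle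
    refine ⟨_, C, hC, fun v => ?_⟩
    obtain ⟨i, rfl⟩ := hspan ▸ mem_univ v
    exact hsupp i
  obtain ⟨z, hz⟩ := (ne_univ_iff_exists_notMem _).mp hspan
  obtain ⟨_, ⟨j, rfl⟩, y, hy, hjy⟩ :=
    hmc.1.preconnected.exists_adj_mem_notMem (mem_range_self 0) hz
  obtain ⟨f, hf, hfj⟩ := hmc.exists_isMatchingInvolution hjy
  rw [← hc.range_rotate j] at hcg hy
  rcases (hc.rotate j).exists_longer_or_hasConformalOddTheta hbip hf hg hcg
    (by simpa [hfj] using hy) with ⟨n, c', hlt, hc', hc'g⟩ | hθ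
  · exact absurd (le_csSup hKbdd ⟨c', hc', hc'g⟩) (not_le.mpr hlt)
  · exact (htheta hθ).elim
end

section
/- Let G be a nonbipartite matching covered graph with a Hamiltonian cycle C (necessarily of even length, since G is matchable). Then, with respect to the proper 2-coloring of V(C), G has at least one black monochromatic chord of C and at least one white monochromatic chord of C. -/
/-- `v` is black in the proper 2-coloring of the (even) cycle `C`. -/
def blackOn {V : Type*} [DecidableEq V] {G : SimpleGraph V} {a : V}
    (C : G.Walk a a) (v : V) : Prop :=
  C.support.idxOf v % 2 = 0

/-- `e` is a black chord of `C`: both ends of `e` are black. -/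
def BlackChordOn {V : Type*} [DecidableEq V] {G : SimpleGraph V} {a : V}
    (C : G.Walk a a) (e : Sym2 V) : Prop :=
  ∃ x y : V, e = s(x, y) ∧ blackOn C x ∧ blackOn C y

/-- `e` is a white chord of `C`: both ends of `e` are white. -/
def WhiteChordOn {V : Type*} [DecidableEq V] {G : SimpleGraph V} {a : V}
    (C : G.Walk a a) (e : Sym2 V) : Prop :=
  ∃ x y : V, e = s(x, y) ∧ ¬ blackOn C x ∧ ¬ blackOn C y

/-- `e` is a monochromatic chord of `C`: both ends have the same color. -/
def MonochromaticOn {V : Type*} [DecidableEq V] {G : SimpleGraph V} {a : V}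
    (C : G.Walk a a) (e : Sym2 V) : Prop :=
  BlackChordOn C e ∨ WhiteChordOn C e


/-!
Colour the vertices by the parity of their position on `C`. A perfect matching forces `C` to have
even length, so the two colour classes have the same size and every edge of `C` joins the two
colours: monochromatic edges are chords. Since `G` is not bipartite some edge is monochromatic,
say black. A perfect matching through it leaves fewer black vertices than white ones to be
matched, so it must also contain a white edge; symmetrically with the colours exchanged.
-/

open Finset

namespace IsPM

variable {V : Type*} {G : SimpleGraph V} {M : Set (Sym2 V)}

theorem existsUnique_mk_mem (hM : IsPM G M) (v : V) : ∃! w, s(v, w) ∈ M := by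
  obtain ⟨e, ⟨heM, hve⟩, he⟩ := hM.2 v
  refine ⟨Sym2.Mem.other hve, show s(v, _) ∈ M by rwa [Sym2.other_spec], fun w hw => ?_⟩
  exact Sym2.congr_right.mp ((he _ ⟨hw, Sym2.mem_mk_left v w⟩).trans (Sym2.other_spec hve).symm)

noncomputable def mate (hM : IsPM G M) (v : V) : V :=
  (hM.existsUnique_mk_mem v).exists.choose

variable {v w : V}

theorem mk_mate_mem (hM : IsPM G M) : s(v, hM.mate v) ∈ M :=
  (hM.existsUnique_mk_mem v).exists.choose_spec

theorem eq_mate_of_mk_mem (hM : IsPM G M) (h : s(v, w) ∈ M) : w = hM.mate v :=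
  (hM.existsUnique_mk_mem v).unique h hM.mk_mate_mem

theorem mate_mate (hM : IsPM G M) : hM.mate (hM.mate v) = v :=
  (hM.eq_mate_of_mk_mem (Sym2.eq_swap ▸ hM.mk_mate_mem)).symm

theorem mate_ne (hM : IsPM G M) : hM.mate v ≠ v :=
  (G.mem_edgeSet.mp (hM.1 hM.mk_mate_mem)).ne.symm

theorem even_card [Fintype V] (hM : IsPM G M) : Even (Fintype.card V) := by
  classical
  let f : Function.End V := hM.mate
  have hsq : f ^ 2 ^ 1 = 1 := funext fun _ => hM.mate_mate
  have hfix := Equiv.Perm.card_fixedPoints_modEq (p := 2) hsq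
  have : IsEmpty (Function.fixedPoints f) := ⟨fun ⟨_, hv⟩ => hM.mate_ne hv⟩
  rw [Fintype.card_eq_zero (α := Function.fixedPoints f)] at hfix
  exact Nat.even_iff.mpr hfix

theorem exists_mk_mem_compl [Fintype V] [DecidableEq V] (hM : IsPM G M) {S : Finset V}
    (hS : #S ≤ #Sᶜ) (hvw : s(v, w) ∈ M) (hv : v ∈ S) (hw : w ∈ S) :
    ∃ x y, s(x, y) ∈ M ∧ x ∉ S ∧ y ∉ S := by
  by_contra! hcompl
  have hv_mate : v = hM.mate w := hM.eq_mate_of_mk_mem (Sym2.eq_swap ▸ hvw)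
  have hw_mate : w = hM.mate v := hM.eq_mate_of_mk_mem hvw
  have hmaps : ∀ x ∈ Sᶜ, hM.mate x ∈ (S.erase v).erase w := by
    intro x hx
    have hxS : x ∉ S := mem_compl.mp hx
    refine mem_erase.mpr
      ⟨fun h => ?_, mem_erase.mpr ⟨fun h => ?_, hcompl x _ hM.mk_mate_mem hxS⟩⟩
    · exact hxS (by rw [← hM.mate_mate (v := x), h, ← hv_mate]; exact hv)
    · exact hxS (by rw [← hM.mate_mate (v := x), h, ← hw_mate]; exact hw)
  have hinj : Set.InjOn hM.mate (Sᶜ : Finset V) := fun x _ y _ h => by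
    rw [← hM.mate_mate (v := x), h, hM.mate_mate]
  have hle := card_le_card_of_injOn hM.mate hmaps hinj
  have hvw_ne : v ≠ w := (G.mem_edgeSet.mp (hM.1 hvw)).ne
  rw [card_erase_of_mem (mem_erase.mpr ⟨hvw_ne.symm, hw⟩), card_erase_of_mem hv] at hle
  have := card_le_card (show {v, w} ⊆ S from insert_subset hv (singleton_subset_iff.mpr hw))
  rw [card_pair hvw_ne] at this
  omega

end IsPM

theorem SimpleGraph.exists_adj_iff_of_not_colorable_two {V : Type*} {G : SimpleGraph V}
    (hG : ¬ G.Colorable 2) (P : V → Prop) : ∃ x y, G.Adj x y ∧ (P x ↔ P y) := by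
  classical
  by_contra h
  have c : G.Coloring Bool := SimpleGraph.Coloring.mk (fun v => decide (P v))
    fun hxy heq => h ⟨_, _, hxy, by simpa using heq⟩
  exact hG (by simpa using c.colorable)

namespace MatchingCovered

variable {V : Type*} [Fintype V] [DecidableEq V] {G : SimpleGraph V}

theorem exists_adj_notMem_of_card_le (hG : MatchingCovered G) {S : Finset V}
    (hS : #S ≤ #Sᶜ) {x y : V} (hxy : G.Adj x y) (hx : x ∈ S) (hy : y ∈ S) :
    ∃ u v, G.Adj u v ∧ u ∉ S ∧ v ∉ S := by
  obtain ⟨M, hM, hmem⟩ := hG.2.2 s(x, y) hxy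
  obtain ⟨u, v, huv, hu, hv⟩ := hM.exists_mk_mem_compl hS hmem hx hy
  exact ⟨u, v, hM.1 huv, hu, hv⟩

theorem exists_adj_mem_iff_exists_adj_notMem (hG : MatchingCovered G) {S : Finset V}
    (hS : #S = #Sᶜ) :
    (∃ x y, G.Adj x y ∧ x ∈ S ∧ y ∈ S) ↔ ∃ x y, G.Adj x y ∧ x ∉ S ∧ y ∉ S := by
  constructor
  · rintro ⟨x, y, hxy, hx, hy⟩
    exact hG.exists_adj_notMem_of_card_le hS.le hxy hx hy
  · rintro ⟨x, y, hxy, hx, hy⟩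
    have hS' : #Sᶜ ≤ #Sᶜᶜ := by rw [compl_compl]; exact hS.ge
    simpa using hG.exists_adj_notMem_of_card_le hS' hxy (mem_compl.mpr hx) (mem_compl.mpr hy)

end MatchingCovered

namespace SimpleGraph.Walk

variable {V : Type*} [DecidableEq V] {G : SimpleGraph V} {a : V} {C : G.Walk a a}

theorem IsCycle.isHamiltonianCycle_of_forall_mem_support (hC : C.IsCycle)
    (hham : ∀ v, v ∈ C.support) : C.IsHamiltonianCycle := by
  refine isHamiltonianCycle_iff_isCycle_and_support_count_tail_eq_one.mpr
    ⟨hC, fun v => List.count_eq_one_of_mem hC.support_nodup ?_⟩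
  rcases C.mem_support_iff.mp (hham v) with rfl | hv
  · exact C.end_mem_tail_support hC.not_nil
  · exact hv

theorem idxOf_support_start : C.support.idxOf a = 0 := by
  rw [← cons_tail_support]
  exact List.idxOf_cons_self

theorem IsCycle.idxOf_getVert (hC : C.IsCycle) {i : ℕ} (hi : i < C.length) :
    C.support.idxOf (C.getVert i) = i := by
  set j := C.support.idxOf (C.getVert i)
  have hj : C.getVert j = C.getVert i := C.getVert_support_idxOf (C.getVert_mem_support i)
  have hjle : j ≤ C.length := by
    have := List.idxOf_lt_length_of_mem (C.getVert_mem_support i)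
    rw [length_support] at this
    omega
  rcases hjle.lt_or_eq with hjlt | hjeq
  · exact hC.getVert_injOn' (by simp only [Set.mem_ofPred_eq]; omega)
      (by simp only [Set.mem_ofPred_eq]; omega) hj
  · have hi0 : i = 0 := hC.getVert_injOn' (by simp only [Set.mem_ofPred_eq]; omega)
      (by simp only [Set.mem_ofPred_eq]; omega)
      (by rw [← hj, hjeq, getVert_length, getVert_zero])
    have := hC.three_le_length
    simp only [j, hi0, getVert_zero, idxOf_support_start] at hjeq
    omega

theorem idxOf_lt_length (hnil : ¬ C.Nil) {v : V} (hv : v ∈ C.support) :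
    C.support.idxOf v < C.length := by
  have hlt := List.idxOf_lt_length_of_mem hv
  rw [length_support] at hlt
  refine lt_of_le_of_ne (by omega) fun heq => ?_
  have hva : v = a := by rw [← C.getVert_support_idxOf hv, heq, getVert_length]
  rw [hva, idxOf_support_start] at heq
  exact hnil (length_eq_zero_iff.mp heq.symm)

instance : DecidablePred (blackOn C) := fun _ => inferInstanceAs (Decidable (_ % 2 = 0))

theorem IsCycle.blackOn_getVert_iff (hC : C.IsCycle) {i : ℕ} (hi : i < C.length) :
    blackOn C (C.getVert i) ↔ i % 2 = 0 := by
  rw [blackOn, hC.idxOf_getVert hi]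

theorem IsCycle.blackOn_iff_not_of_mem_edges (hC : C.IsCycle) (heven : Even C.length)
    {u v : V} (h : s(u, v) ∈ C.edges) : blackOn C u ↔ ¬ blackOn C v := by
  obtain ⟨i, hi, huv⟩ := (C.mk_mem_edges_iff_exists).mp h
  have hstep : blackOn C (C.getVert i) ↔ ¬ blackOn C (C.getVert (i + 1)) := by
    rw [hC.blackOn_getVert_iff hi]
    rcases (show i + 1 ≤ C.length from hi).lt_or_eq with hlt | heq
    · rw [hC.blackOn_getVert_iff hlt]
      omega
    · rw [heq, getVert_length, blackOn, idxOf_support_start]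
      obtain ⟨m, hm⟩ := heven
      omega
  rcases Sym2.eq_iff.mp huv with ⟨rfl, rfl⟩ | ⟨rfl, rfl⟩
  · exact hstep
  · tauto

variable [Fintype V]

theorem IsHamiltonianCycle.card_filter_idxOf (hC : C.IsHamiltonianCycle) (P : ℕ → Prop)
    [DecidablePred P] : #{v | P (C.support.idxOf v)} = #{k ∈ range C.length | P k} := by
  refine card_nbij' (fun v => C.support.idxOf v) C.getVert ?_ ?_ ?_ ?_
  · intro v hv
    simp only [coe_filter, mem_univ, true_and, Set.mem_ofPred_eq, mem_range] at hv ⊢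
    exact ⟨idxOf_lt_length hC.not_nil (hC.mem_support v), hv⟩
  · intro k hk
    simp only [coe_filter, mem_univ, true_and, Set.mem_ofPred_eq, mem_range] at hk ⊢
    rw [hC.isCycle.idxOf_getVert hk.1]
    exact hk.2
  · intro v _
    exact C.getVert_support_idxOf (hC.mem_support v)
  · intro k hk
    simp only [coe_filter, Set.mem_ofPred_eq, mem_range] at hk
    exact hC.isCycle.idxOf_getVert hk.1

theorem IsHamiltonianCycle.card_blackOn_eq_card_not_blackOn (hC : C.IsHamiltonianCycle)
    (heven : Even C.length) : #{v | blackOn C v} = #{v | ¬ blackOn C v} := by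
  have hblack : #{v | blackOn C v} = _ := hC.card_filter_idxOf (· % 2 = 0)
  have hwhite : #{v | ¬ blackOn C v} = _ := hC.card_filter_idxOf (¬ · % 2 = 0)
  have hsum := card_filter_add_card_filter_not (s := range C.length) (· % 2 = 0)
  have hodd : #{k ∈ range C.length | ¬ k % 2 = 0} = C.length / 2 := by
    rw [← Nat.card_multiples]
    congr 1
    ext k
    simp only [mem_filter, Nat.dvd_iff_mod_eq_zero]
    exact and_congr_right fun _ => by omega
  obtain ⟨m, hm⟩ := heven
  rw [card_range] at hsum
  omega

end SimpleGraph.Walk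

/-- Let `G` be a nonbipartite matching covered graph with a Hamiltonian cycle `C`. Then
`G` has at least one black monochromatic chord of `C` and at least one white
monochromatic chord of `C`. -/
theorem statement_19 {V : Type*} [Fintype V] [DecidableEq V] (G : SimpleGraph V)
    (hmc : MatchingCovered G) (hnb : ¬ G.Colorable 2)
    (a : V) (C : G.Walk a a) (hC : C.IsCycle) (hham : ∀ v : V, v ∈ C.support) :
    (∃ e : Sym2 V, e ∈ G.edgeSet ∧ e ∉ C.edges ∧ BlackChordOn C e) ∧
    (∃ e : Sym2 V, e ∈ G.edgeSet ∧ e ∉ C.edges ∧ WhiteChordOn C e) := by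
  have hH := hC.isHamiltonianCycle_of_forall_mem_support hham
  obtain ⟨M, hM, -⟩ := hmc.2.2 _ hmc.2.1.some_mem
  have heven : Even C.length := hH.length_eq ▸ hM.even_card
  set B : Finset V := {v | blackOn C v}
  have hcard : #B = #Bᶜ := by
    rw [compl_filter]
    exact hH.card_blackOn_eq_card_not_blackOn heven
  have hchord {x y : V} (hxy : blackOn C x ↔ blackOn C y) : s(x, y) ∉ C.edges := by
    intro h
    have := hC.blackOn_iff_not_of_mem_edges heven h
    tauto
  have hboth :
      (∃ x y, G.Adj x y ∧ x ∈ B ∧ y ∈ B) ∧ ∃ x y, G.Adj x y ∧ x ∉ B ∧ y ∉ B := by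
    rw [← hmc.exists_adj_mem_iff_exists_adj_notMem hcard, and_self]
    obtain ⟨x, y, hxy, hxy_color⟩ := G.exists_adj_iff_of_not_colorable_two hnb (· ∈ B)
    by_cases hx : x ∈ B
    · exact ⟨x, y, hxy, hx, hxy_color.mp hx⟩
    · exact (hmc.exists_adj_mem_iff_exists_adj_notMem hcard).mpr
        ⟨x, y, hxy, hx, fun hy => hx (hxy_color.mpr hy)⟩
  obtain ⟨⟨x, y, hxy, hx, hy⟩, ⟨u, v, huv, hu, hv⟩⟩ := hboth
  simp only [B, mem_filter, mem_univ, true_and] at hx hy hu hv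
  exact ⟨⟨s(x, y), hxy, hchord (iff_of_true hx hy), x, y, rfl, hx, hy⟩,
    ⟨s(u, v), huv, hchord (iff_of_false hu hv), u, v, rfl, hu, hv⟩⟩
end
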